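/- arXiv:2203.13578 — 6 statements merged into one kernel-verified Lean document; each statement's English description precedes it below -/
import Mathlib

section
/- For every n ≥ 0, the type II recursion polynomial satisfies the determinantal formula B_n = h_n · det M_n, where M_n is the p×p matrix with entries (M_n)_{i,a} = A^{(a)}_{n+i−1} for 1 ≤ i, a ≤ p. -/
/-!
Write `L = x·I − T`. The recurrence for `B` says that `(B_0, B_1, …)` is a right null vector of
`L`, so `L_n (B_0, …, B_{n-1})ᵀ` is `B_n` times the last unit vector. As `B_0 = 1`, putting this
vector into the first column of the truncation `L_n` does not change its determinant, and expanding
along that column (the minor is triangular with diagonal `-1`) gives `det L_n = B_n`. The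
recurrence for `A^{(a)}` says that `A^{(a)}` is a left null vector of `L`; since column `c` of `L`
vanishes below row `c + p`, this survives truncation to `n + p` rows when `c < n`.

Let `Z` be the `(n+p) × (n+p)` matrix whose first `n` columns are those of `L` and whose last `p`
are unit vectors, so `det Z = B_n`, and let `P` have rows `e_p, …, e_{n+p-1}, A^{(1)}, …, A^{(p)}`,
a cyclic shift of the rows of an upper unitriangular matrix, so `det P = (-1)^{np}`. Then `P Z` is
block upper triangular with diagonal blocks `(L_{r+p,c})_{r,c<n}`, which is triangular with
diagonal `-T_{r+p,r}`, and `M_nᵀ`.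
-/

open Polynomial

namespace BandedHessenberg

variable {K : Type*}

def truncMat (f : ℕ → ℕ → K) (N : ℕ) : Matrix (Fin N) (Fin N) K :=
  Matrix.of fun i j => f i j


@[simp]
lemma truncMat_apply (f : ℕ → ℕ → K) (N : ℕ) (i j : Fin N) : truncMat f N i j = f i j := rfl

lemma truncMat_congr {f g : ℕ → ℕ → K} {N : ℕ} (h : ∀ i j, i < N → j < N → f i j = g i j) :
    truncMat f N = truncMat g N :=
  Matrix.ext fun i j => h i j i.isLt j.isLt

lemma truncMat_submatrix_finSumFinEquiv (f : ℕ → ℕ → K) (n p : ℕ) :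
    (truncMat f (n + p)).submatrix finSumFinEquiv finSumFinEquiv =
      Matrix.fromBlocks (truncMat f n) (Matrix.of fun (i : Fin n) (b : Fin p) => f i (n + b))
        (Matrix.of fun (a : Fin p) (j : Fin n) => f (n + a) j)
        (truncMat (fun a b => f (n + a) (n + b)) p) := by
  ext (i | a) (j | b) <;> rfl

variable [CommRing K]

lemma truncMat_mul (f g : ℕ → ℕ → K) (N : ℕ) :
    truncMat f N * truncMat g N = truncMat (fun i j => ∑ m ∈ Finset.range N, f i m * g m j) N := by
  ext i j
  simp [Matrix.mul_apply, Fin.sum_univ_eq_sum_range (fun m => f i m * g m j)]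

lemma det_truncMat_of_upperTriangular {f : ℕ → ℕ → K} (h : ∀ i j, j < i → f i j = 0) (N : ℕ) :
    (truncMat f N).det = ∏ i ∈ Finset.range N, f i i := by
  rw [Matrix.det_of_isUpperTriangular (M := truncMat f N) fun i j (hij : j < i) => h i j hij]
  exact Fin.prod_univ_eq_prod_range (fun i => f i i) N

lemma det_truncMat_add_of_upperRight_eq_zero {f : ℕ → ℕ → K} {n p : ℕ}
    (h : ∀ i b, i < n → b < p → f i (n + b) = 0) :
    (truncMat f (n + p)).det =
      (truncMat f n).det * (truncMat (fun a b => f (n + a) (n + b)) p).det := by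
  have hzero : (Matrix.of fun (i : Fin n) (b : Fin p) => f i (n + b)) = 0 :=
    Matrix.ext fun i b => h i b i.isLt b.isLt
  rw [← Matrix.det_submatrix_equiv_self finSumFinEquiv, truncMat_submatrix_finSumFinEquiv, hzero,
    Matrix.det_fromBlocks_zero₁₂]

lemma det_truncMat_add_of_lowerLeft_eq_zero {f : ℕ → ℕ → K} {n p : ℕ}
    (h : ∀ a j, a < p → j < n → f (n + a) j = 0) :
    (truncMat f (n + p)).det =
      (truncMat f n).det * (truncMat (fun a b => f (n + a) (n + b)) p).det := by
  have hzero : (Matrix.of fun (a : Fin p) (j : Fin n) => f (n + a) j) = 0 :=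
    Matrix.ext fun a j => h a j a.isLt j.isLt
  rw [← Matrix.det_submatrix_equiv_self finSumFinEquiv, truncMat_submatrix_finSumFinEquiv, hzero,
    Matrix.det_fromBlocks_zero₂₁]

lemma val_finRotate_pow (N k : ℕ) (i : Fin N) : ((finRotate N ^ k) i : ℕ) = (i + k) % N := by
  induction k generalizing i with
  | zero => simp [Nat.mod_eq_of_lt i.isLt]
  | succ k ih =>
    obtain _ | N := N
    · exact i.elim0
    rw [pow_succ, Equiv.Perm.mul_apply, ih, finRotate_apply, Fin.val_add, Fin.val_one',
      Nat.add_mod_mod, Nat.mod_add_mod, add_assoc, add_comm 1 k]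

lemma det_truncMat_rotate (f : ℕ → ℕ → K) (n p : ℕ) :
    (truncMat (fun r c => f ((r + p) % (n + p)) c) (n + p)).det =
      (-1) ^ (n * p) * (truncMat f (n + p)).det := by
  have hrot : truncMat (fun r c => f ((r + p) % (n + p)) c) (n + p) =
      (truncMat f (n + p)).submatrix (finRotate (n + p) ^ p) id := by
    ext r c
    simp [val_finRotate_pow]
  rw [hrot, Matrix.det_permute, map_pow, sign_finRotate]
  obtain _ | q := p
  · simp
  have hexp : (n + (q + 1) - 1) * (q + 1) = n * (q + 1) + q * (q + 1) := by
    rw [show n + (q + 1) - 1 = n + q by omega]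
    ring
  push_cast
  rw [← pow_mul, hexp, pow_add, (Nat.even_mul_succ_self q).neg_one_pow, mul_one]

def charEntry (x : K) (T : ℕ → ℕ → K) (i j : ℕ) : K :=
  (if i = j then x else 0) - T i j

def charColumns (x : K) (T : ℕ → ℕ → K) (n r c : ℕ) : K :=
  if c < n then charEntry x T r c else if r = c then 1 else 0

def typeIRows {p : ℕ} (A : Fin p → ℕ → K) (r c : ℕ) : K :=
  if h : r < p then A ⟨r, h⟩ c else if r = c then 1 else 0

variable {p : ℕ} {T : ℕ → ℕ → K} {x : K} {B : ℕ → K}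

lemma sum_range_row_mul_eq_sum_Icc (hTsub : ∀ n m, m + p < n → T n m = 0) (g : ℕ → K) (k : ℕ) :
    ∑ m ∈ Finset.range k, T k m * g m =
      ∑ j ∈ Finset.Icc 1 p, if j ≤ k then T k (k - j) * g (k - j) else 0 := by
  have hband : Finset.Ico (k - p) k ⊆ Finset.range k := fun m hm => by
    simp only [Finset.mem_Ico, Finset.mem_range] at hm ⊢; omega
  rw [← Finset.sum_filter, ← Finset.sum_subset hband fun m hm hm' => by
    simp only [Finset.mem_Ico, Finset.mem_range] at hm hm'
    rw [hTsub k m (by omega), zero_mul]]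
  refine Finset.sum_nbij' (fun m => k - m) (fun j => k - j) ?_ ?_ ?_ ?_ ?_ <;>
    intro m hm <;> simp only [Finset.mem_Ico, Finset.mem_filter, Finset.mem_Icc] at hm ⊢ <;>
    first | omega | rw [Nat.sub_sub_self hm.2.le]

lemma sum_range_col_mul_eq (hT1 : ∀ n, T n (n + 1) = 1) (hTsup : ∀ n m, n + 1 < m → T n m = 0)
    (hTsub : ∀ n m, m + p < n → T n m = 0) (g : ℕ → K) {c N : ℕ} (hN : c + p < N) :
    ∑ m ∈ Finset.range N, T m c * g m =
      (if c = 0 then 0 else g (c - 1)) + ∑ i ∈ Finset.range (p + 1), T (c + i) c * g (c + i) := by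
  have hbelow : ∑ m ∈ Finset.Ico (c + (p + 1)) N, T m c * g m = 0 :=
    Finset.sum_eq_zero fun m hm => by
      rw [hTsub m c (by simp only [Finset.mem_Ico] at hm; omega), zero_mul]
  have habove : ∑ m ∈ Finset.range c, T m c * g m = if c = 0 then 0 else g (c - 1) := by
    obtain _ | c := c
    · simp
    rw [Finset.sum_range_succ, Finset.sum_eq_zero fun m hm => by
      rw [hTsup m (c + 1) (by simp only [Finset.mem_range] at hm; omega), zero_mul]]
    simp [hT1]
  rw [← Finset.sum_range_add_sum_Ico _ (show c + (p + 1) ≤ N by omega), hbelow, add_zero,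
    Finset.sum_range_add, habove]

lemma sum_range_succ_charEntry_mul (hTsub : ∀ n m, m + p < n → T n m = 0)
    (hBrec : ∀ n, B (n + 1) = (x - T n n) * B n
      - ∑ j ∈ Finset.Icc 1 p, (if j ≤ n then T n (n - j) * B (n - j) else 0)) (k : ℕ) :
    ∑ m ∈ Finset.range (k + 1), charEntry x T k m * B m = B (k + 1) := by
  have hbelow : ∀ m ∈ Finset.range k, charEntry x T k m * B m = -(T k m * B m) := fun m hm => by
    rw [charEntry, if_neg (by simp only [Finset.mem_range] at hm; omega), zero_sub, neg_mul]
  rw [hBrec, Finset.sum_range_succ, Finset.sum_congr rfl hbelow, Finset.sum_neg_distrib,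
    sum_range_row_mul_eq_sum_Icc hTsub, charEntry, if_pos rfl]
  ring

lemma sum_range_charEntry_mul (hT1 : ∀ n, T n (n + 1) = 1)
    (hTsup : ∀ n m, n + 1 < m → T n m = 0) (hTsub : ∀ n m, m + p < n → T n m = 0)
    (hBrec : ∀ n, B (n + 1) = (x - T n n) * B n
      - ∑ j ∈ Finset.Icc 1 p, (if j ≤ n then T n (n - j) * B (n - j) else 0)) {k N : ℕ}
    (hk : k < N) :
    ∑ m ∈ Finset.range N, charEntry x T k m * B m = if k + 1 = N then B N else 0 := by
  split_ifs with hN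
  · subst hN
    exact sum_range_succ_charEntry_mul hTsub hBrec k
  have hfar : ∑ m ∈ Finset.Ico (k + 2) N, charEntry x T k m * B m = 0 :=
    Finset.sum_eq_zero fun m hm => by
      simp only [Finset.mem_Ico] at hm
      rw [charEntry, if_neg (by omega), hTsup k m (by omega), sub_zero, zero_mul]
  rw [← Finset.sum_range_add_sum_Ico _ (show k + 2 ≤ N by omega), hfar, add_zero,
    Finset.sum_range_succ, sum_range_succ_charEntry_mul hTsub hBrec k, charEntry, if_neg (by omega),
    hT1]
  ring

lemma det_updateCol_zero_single_last (hT1 : ∀ n, T n (n + 1) = 1)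
    (hTsup : ∀ n m, n + 1 < m → T n m = 0) (k : ℕ) (b : K) :
    ((truncMat (charEntry x T) (k + 1)).updateCol 0 (Pi.single (Fin.last k) b)).det = b := by
  set W := (truncMat (charEntry x T) (k + 1)).updateCol 0 (Pi.single (Fin.last k) b)
  have hminor : (W.submatrix (Fin.last k).succAbove Fin.succ).det = (-1) ^ k := by
    have hentry : ∀ i j : Fin k,
        W.submatrix (Fin.last k).succAbove Fin.succ i j = charEntry x T i (j + 1) := by
      intro i j
      simp [W]
    have hdiag : ∀ i : Fin k, W.submatrix (Fin.last k).succAbove Fin.succ i i = -1 := fun i => by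
      rw [hentry, charEntry, if_neg (by omega), hT1, zero_sub]
    rw [Matrix.det_of_isLowerTriangular _ fun i j (hij : i < j) => by
      rw [hentry, charEntry, if_neg (by omega), hTsup _ _ (by omega), sub_zero],
      Finset.prod_congr rfl fun i _ => hdiag i, Finset.prod_const, Finset.card_univ,
      Fintype.card_fin]
  rw [Matrix.det_succ_column_zero, Finset.sum_eq_single (Fin.last k) (fun i _ hi => by
    simp [W, hi]) (by simp), hminor]
  simp only [W, Fin.val_last, Matrix.updateCol_self, Pi.single_eq_same]
  rw [mul_comm, ← mul_assoc, ← pow_add, Even.neg_one_pow ⟨k, rfl⟩, one_mul]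

theorem det_truncMat_charEntry (hT1 : ∀ n, T n (n + 1) = 1)
    (hTsup : ∀ n m, n + 1 < m → T n m = 0) (hTsub : ∀ n m, m + p < n → T n m = 0) (hB0 : B 0 = 1)
    (hBrec : ∀ n, B (n + 1) = (x - T n n) * B n
      - ∑ j ∈ Finset.Icc 1 p, (if j ≤ n then T n (n - j) * B (n - j) else 0)) (n : ℕ) :
    (truncMat (charEntry x T) n).det = B n := by
  obtain _ | k := n
  · simp [hB0]
  set V := truncMat (charEntry x T) (k + 1)
  have hnull : (fun i => ∑ j : Fin (k + 1), B j • V i j) = Pi.single (Fin.last k) (B (k + 1)) := by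
    funext i
    have hrow := sum_range_charEntry_mul hT1 hTsup hTsub hBrec i.isLt
    rw [← Fin.sum_univ_eq_sum_range (fun m => charEntry x T i m * B m)] at hrow
    simp only [add_left_inj] at hrow
    simp [V, mul_comm (B _), hrow, Pi.single_apply, Fin.ext_iff]
  rw [← det_updateCol_zero_single_last hT1 hTsup k (B (k + 1)), ← hnull, Matrix.det_updateCol_sum]
  simp [V, hB0]

lemma det_truncMat_typeIRows {A : Fin p → ℕ → K}
    (hAzero : ∀ a : Fin p, ∀ j : ℕ, j < (a : ℕ) → A a j = 0) (hAone : ∀ a : Fin p, A a (a : ℕ) = 1)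
    (N : ℕ) : (truncMat (typeIRows A) N).det = 1 := by
  rw [det_truncMat_of_upperTriangular fun i j hji => ?_]
  · refine Finset.prod_eq_one fun i _ => ?_
    by_cases h : i < p
    · rw [typeIRows, dif_pos h]
      exact hAone ⟨i, h⟩
    · rw [typeIRows, dif_neg h, if_pos rfl]
  · by_cases h : i < p
    · rw [typeIRows, dif_pos h]
      exact hAzero ⟨i, h⟩ j hji
    · rw [typeIRows, dif_neg h, if_neg (by omega)]

lemma det_truncMat_charColumns (n : ℕ) :
    (truncMat (charColumns x T n) (n + p)).det = (truncMat (charEntry x T) n).det := by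
  rw [det_truncMat_add_of_upperRight_eq_zero fun i b hi _ => by simp [charColumns]; omega,
    det_truncMat_of_upperTriangular (f := fun a b => charColumns x T n (n + a) (n + b))
      fun a b hba => by simp [charColumns]; omega,
    truncMat_congr (f := charColumns x T n) (g := charEntry x T) fun r c _ hc => if_pos hc]
  simp [charColumns]

lemma sum_range_mul_charEntry_eq_zero (hT1 : ∀ n, T n (n + 1) = 1)
    (hTsup : ∀ n m, n + 1 < m → T n m = 0) (hTsub : ∀ n m, m + p < n → T n m = 0) {g : ℕ → K}
    {c N : ℕ} (hN : c + p < N)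
    (hg : (if c = 0 then 0 else g (c - 1)) + ∑ i ∈ Finset.range (p + 1), T (c + i) c * g (c + i)
      = x * g c) :
    ∑ m ∈ Finset.range N, g m * charEntry x T m c = 0 := by
  simp only [charEntry, mul_sub, mul_ite, mul_zero, Finset.sum_sub_distrib, Finset.sum_ite_eq',
    Finset.mem_range, if_pos (show c < N by omega), mul_comm (g _) (T _ _),
    sum_range_col_mul_eq hT1 hTsup hTsub g hN, hg]
  ring

lemma det_truncMat_rotate_typeIRows_mul_charColumns (hp : 1 ≤ p) (hT1 : ∀ n, T n (n + 1) = 1)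
    (hTsup : ∀ n m, n + 1 < m → T n m = 0) (hTsub : ∀ n m, m + p < n → T n m = 0)
    {A : Fin p → ℕ → K}
    (hArec : ∀ a : Fin p, ∀ n : ℕ, (if n = 0 then 0 else A a (n - 1))
      + ∑ i ∈ Finset.range (p + 1), T (n + i) n * A a (n + i) = x * A a n) (n : ℕ) :
    (truncMat (fun r c => typeIRows A ((r + p) % (n + p)) c) (n + p) *
        truncMat (charColumns x T n) (n + p)).det =
      (∏ i ∈ Finset.range n, -T (i + p) i) * (Matrix.of fun a b : Fin p => A a (n + b)).det := by
  have hshift : ∀ r < n, (r + p) % (n + p) = r + p := fun r hr => Nat.mod_eq_of_lt (by omega)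
  have hwrap : ∀ a < p, (n + a + p) % (n + p) = a := fun a ha => by
    rw [show n + a + p = a + (n + p) by ring, Nat.add_mod_right, Nat.mod_eq_of_lt (by omega)]
  rw [truncMat_mul, det_truncMat_add_of_lowerLeft_eq_zero fun a j ha hj => ?_]
  · congr 1
    · rw [truncMat_congr (g := fun r c => charEntry x T (r + p) c) fun r c hr hc => ?_,
        det_truncMat_of_upperTriangular fun r c hcr => ?_]
      · refine Finset.prod_congr rfl fun r _ => ?_
        rw [charEntry, if_neg (by omega), zero_sub]
      · rw [charEntry, if_neg (by omega), hTsub _ _ (by omega), sub_zero]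
      · simp only [typeIRows, hshift r hr, dif_neg (show ¬ r + p < p by omega), ite_mul, one_mul,
          zero_mul, Finset.sum_ite_eq, Finset.mem_range, if_pos (show r + p < n + p by omega),
          charColumns, if_pos hc]
    · congr 1
      ext a b
      simp [hwrap a a.isLt, typeIRows, charColumns]
  · simp only [hwrap a ha, typeIRows, dif_pos ha]
    rw [← sum_range_mul_charEntry_eq_zero hT1 hTsup hTsub (show j + p < n + p by omega)
      (hArec ⟨a, ha⟩ j)]
    exact Finset.sum_congr rfl fun m _ => by rw [charColumns, if_pos hj]

theorem det_truncMat_charEntry_eq_det_typeI (hp : 1 ≤ p) (hT1 : ∀ n, T n (n + 1) = 1)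
    (hTsup : ∀ n m, n + 1 < m → T n m = 0) (hTsub : ∀ n m, m + p < n → T n m = 0)
    {A : Fin p → ℕ → K}
    (hAzero : ∀ a : Fin p, ∀ j : ℕ, j < (a : ℕ) → A a j = 0) (hAone : ∀ a : Fin p, A a (a : ℕ) = 1)
    (hArec : ∀ a : Fin p, ∀ n : ℕ, (if n = 0 then 0 else A a (n - 1))
      + ∑ i ∈ Finset.range (p + 1), T (n + i) n * A a (n + i) = x * A a n) (n : ℕ) :
    (truncMat (charEntry x T) n).det =
      (-1) ^ ((p - 1) * n) * (∏ i ∈ Finset.range n, T (i + p) i) *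
        (Matrix.of fun a b : Fin p => A a (n + b)).det := by
  have hdet := Matrix.det_mul (truncMat (fun r c => typeIRows A ((r + p) % (n + p)) c) (n + p))
    (truncMat (charColumns x T n) (n + p))
  rw [det_truncMat_rotate_typeIRows_mul_charColumns hp hT1 hTsup hTsub hArec, det_truncMat_rotate,
    det_truncMat_typeIRows hAzero hAone, det_truncMat_charColumns, Finset.prod_neg,
    Finset.card_range] at hdet
  obtain ⟨q, rfl⟩ : ∃ q, p = q + 1 := ⟨p - 1, by omega⟩
  rw [show n * (q + 1) = q * n + n by ring, pow_add] at hdet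
  rw [Nat.add_sub_cancel]
  set s : K := (-1) ^ (q * n)
  set t : K := (-1) ^ n
  set D := (truncMat (charEntry x T) n).det
  set prodT := ∏ i ∈ Finset.range n, T (i + (q + 1)) i
  set M := (Matrix.of fun a b : Fin (q + 1) => A a (n + b)).det
  have hs : s * s = 1 := by rw [← mul_pow, neg_one_mul, neg_neg, one_pow]
  have ht : t * t = 1 := by rw [← mul_pow, neg_one_mul, neg_neg, one_pow]
  linear_combination (-(s * t)) * hdet + (s * prodT * M - D * s * s) * ht - D * hs

end BandedHessenberg

theorem stmt_0_general
    (p : ℕ) (hp : 1 ≤ p)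
    (T : ℕ → ℕ → ℝ)
    (hT1 : ∀ n, T n (n + 1) = 1)
    (hTsup : ∀ n m, n + 1 < m → T n m = 0)
    (hTsub : ∀ n m, m + p < n → T n m = 0)
    (B : ℕ → Polynomial ℝ)
    (hB0 : B 0 = 1)
    (hBrec : ∀ n, B (n + 1) = (X - C (T n n)) * B n
      - ∑ j ∈ Finset.Icc 1 p, (if j ≤ n then C (T n (n - j)) * B (n - j) else 0))
    (A : Fin p → ℕ → Polynomial ℝ)
    (hAzero : ∀ a : Fin p, ∀ j : ℕ, j < (a : ℕ) → A a j = 0)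
    (hAone : ∀ a : Fin p, A a (a : ℕ) = 1)
    (hArec : ∀ a : Fin p, ∀ n : ℕ,
      (if n = 0 then 0 else A a (n - 1))
        + ∑ i ∈ Finset.range (p + 1), C (T (n + i) n) * A a (n + i) = X * A a n)
    (h : ℕ → ℝ)
    (hh : ∀ n, h n = (-1 : ℝ) ^ ((p - 1) * n) * ∏ i ∈ Finset.range n, T (i + p) i) :
    ∀ n : ℕ, B n = C (h n) *
      Matrix.det (Matrix.of fun i a : Fin p => A a (n + (i : ℕ))) := by
  intro n
  have hT1' : ∀ n, C (T n (n + 1)) = 1 := fun n => by rw [hT1, map_one]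
  have hTsup' : ∀ n m, n + 1 < m → C (T n m) = 0 := fun n m hnm => by rw [hTsup n m hnm, map_zero]
  have hTsub' : ∀ n m, m + p < n → C (T n m) = 0 := fun n m hnm => by rw [hTsub n m hnm, map_zero]
  rw [← BandedHessenberg.det_truncMat_charEntry (x := X) (T := fun i j => C (T i j)) hT1' hTsup'
      hTsub' hB0 hBrec n,
    BandedHessenberg.det_truncMat_charEntry_eq_det_typeI hp hT1' hTsup' hTsub' hAzero hAone hArec n,
    hh, map_mul, map_pow, map_neg, map_one, map_prod, ← Matrix.det_transpose]
  rfl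

theorem stmt_0
    (p : ℕ) (hp : 1 ≤ p)
    (T : ℕ → ℕ → ℝ)
    (hT1 : ∀ n, T n (n + 1) = 1)
    (hTsup : ∀ n m, n + 1 < m → T n m = 0)
    (hTsub : ∀ n m, m + p < n → T n m = 0)
    (hTlow : ∀ n, p ≤ n → T n (n - p) ≠ 0)
    (B : ℕ → Polynomial ℝ)
    (hB0 : B 0 = 1)
    (hBrec : ∀ n, B (n + 1) = (X - C (T n n)) * B n
      - ∑ j ∈ Finset.Icc 1 p, (if j ≤ n then C (T n (n - j)) * B (n - j) else 0))
    (A : Fin p → ℕ → Polynomial ℝ)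
    (hAconst : ∀ a : Fin p, ∀ j < p, ∃ c : ℝ, A a j = C c)
    (hAzero : ∀ a : Fin p, ∀ j : ℕ, j < (a : ℕ) → A a j = 0)
    (hAone : ∀ a : Fin p, A a (a : ℕ) = 1)
    (hArec : ∀ a : Fin p, ∀ n : ℕ,
      (if n = 0 then 0 else A a (n - 1))
        + ∑ i ∈ Finset.range (p + 1), C (T (n + i) n) * A a (n + i) = X * A a n)
    (h : ℕ → ℝ)
    (hh : ∀ n, h n = (-1 : ℝ) ^ ((p - 1) * n) * ∏ i ∈ Finset.range n, T (i + p) i) :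
    ∀ n : ℕ, B n = C (h n) *
      Matrix.det (Matrix.of fun i a : Fin p => A a (n + (i : ℕ))) :=
  stmt_0_general p hp T hT1 hTsup hTsub B hB0 hBrec A hAzero hAone hArec h hh
end

section
/- If λ is a zero of B_{N+1}, then the row vector (Q_{0,N}(λ), Q_{1,N}(λ), …, Q_{N,N}(λ)) is a left eigenvector of T^{[N]} with eigenvalue λ: (Q_{0,N}(λ),…,Q_{N,N}(λ))·T^{[N]} = λ·(Q_{0,N}(λ),…,Q_{N,N}(λ)). -/
/-!
Evaluate everything at a zero `λ` of `B_{N+1}`. Then `(B_0(λ), …, B_N(λ))` is a right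
eigenvector of `T^{[N]}`, so `T^{[N]}` also has a left eigenvector `w` for `λ`. Extended by zeros,
`w` solves the type I recurrence in the columns `0, …, N`; since `T_{n+p,n} ≠ 0`, a solution is
fixed by its first `p` values, and the `A^{(a)}(λ)` have unitriangular initial values, so
`w_n = Σ_a c_a A^{(a)}_n(λ)` for `n ≤ N + p` with `c ≠ 0`. As `w` vanishes at `N+1, …, N+p`, every
determinant whose rows are among `A_{N+1}(λ), …, A_{N+p}(λ)` is zero. Finally
`n ↦ Q_{n,N}(λ)` is a linear functional applied to the vectors `A_n(λ) = (A^{(a)}_n(λ))_a`, which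
satisfy the full column recurrence; truncated at `N`, the recurrence leaves only boundary terms
`A_{N+k}(λ)`, `1 ≤ k ≤ p`, on which this functional vanishes.
-/

open Polynomial

noncomputable def Qp (p : ℕ) (A : Fin p → ℕ → Polynomial ℝ) (n N : ℕ) : Polynomial ℝ :=
  Matrix.det (Matrix.of fun i a : Fin p =>
    if (i : ℕ) = 0 then A a n else A a (N + (i : ℕ)))

noncomputable def truncM (T : ℕ → ℕ → ℝ) (N : ℕ) : Matrix (Fin (N + 1)) (Fin (N + 1)) ℝ :=
  Matrix.of fun i j : Fin (N + 1) => T (i : ℕ) (j : ℕ)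

open Finset Matrix

theorem sum_range_eq_sum_Icc_of_eq_zero {M : Type*} [AddCommMonoid M] {p n : ℕ} (g : ℕ → M)
    (hg : ∀ m, m + p < n → g m = 0) :
    ∑ m ∈ range n, g m = ∑ j ∈ Icc 1 p, if j ≤ n then g (n - j) else 0 := by
  rw [← sum_filter, ← sum_filter_of_ne (p := fun m => n ≤ m + p)
    fun m _ hm => by_contra fun h => hm (hg m (by omega))]
  refine sum_nbij' (n - ·) (n - ·) ?_ ?_ ?_ ?_ fun m hm => ?_ <;>
    simp only [mem_filter, mem_range, mem_Icc] at * <;> try omega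
  rw [Nat.sub_sub_self hm.1.le]

section BandRecurrence

variable {K V W : Type*} [Field K] [AddCommGroup V] [Module K V] [AddCommGroup W] [Module K W]

/-- The `n`-th entry of the row vector `x` times `T`, where the superdiagonal entry
`T (n - 1) n = 1` is built in and the band `T m n = 0` for `m > n + p` is used. -/
def bandVecMul (T : ℕ → ℕ → K) (p : ℕ) (x : ℕ → V) (n : ℕ) : V :=
  (if n = 0 then 0 else x (n - 1)) + ∑ i ∈ range (p + 1), T (n + i) n • x (n + i)

variable {p : ℕ} {T : ℕ → ℕ → K}

theorem sum_range_smul_eq_bandVecMul (hT1 : ∀ n, T n (n + 1) = 1)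
    (hTsup : ∀ n m, n + 1 < m → T n m = 0) (hTsub : ∀ n m, m + p < n → T n m = 0)
    (x : ℕ → V) {n L : ℕ} (hL : n + p < L) :
    ∑ m ∈ range L, T m n • x m = bandVecMul T p x n := by
  have hzero : ∀ m, m + 1 < n ∨ n + p < m → T m n • x m = 0 := by
    rintro m (hm | hm)
    · rw [hTsup m n hm, zero_smul]
    · rw [hTsub m n hm, zero_smul]
  cases n with
  | zero =>
    rw [← sum_subset (range_subset_range.mpr (show p + 1 ≤ L by omega))
      fun m hm hm' => hzero m (by simp at hm'; omega)]
    simp [bandVecMul]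
  | succ k =>
    have hsub : Ico k (k + p + 2) ⊆ range L := fun m hm => by simp at hm ⊢; omega
    rw [← sum_subset hsub fun m hm hm' => hzero m (by simp at hm'; omega),
      sum_Ico_eq_sum_range, show k + p + 2 - k = p + 1 + 1 by omega, sum_range_succ', add_zero,
      hT1, one_smul, bandVecMul, if_neg k.succ_ne_zero, Nat.add_sub_cancel, add_comm]
    simp only [add_right_comm k, add_assoc]

theorem bandVecMul_comp_linearMap (f : V →ₗ[K] W) (x : ℕ → V) (n : ℕ) :
    bandVecMul T p (f ∘ x) n = f (bandVecMul T p x n) := by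
  simp [bandVecMul, apply_ite f]

theorem eq_of_bandVecMul_eq [NeZero p] (hTlow : ∀ n, T (n + p) n ≠ 0) {μ : K} {N : ℕ}
    {x y : ℕ → K}
    (hx : ∀ n ≤ N, bandVecMul T p x n = μ • x n) (hy : ∀ n ≤ N, bandVecMul T p y n = μ • y n)
    (hxy : ∀ n < p, x n = y n) : ∀ n ≤ N + p, x n = y n := by
  intro n
  induction n using Nat.strong_induction_on with
  | _ n ih =>
  intro hn
  obtain hnp | ⟨m, rfl⟩ : n < p ∨ ∃ m, n = m + p := by
    rcases lt_or_ge n p with h | h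
    exacts [.inl h, .inr ⟨n - p, by omega⟩]
  · exact hxy n hnp
  have hlow : ∀ k < m + p, x k = y k := fun k hk => ih k hk (by omega)
  have hx' := hx m (by omega)
  have hy' := hy m (by omega)
  simp only [bandVecMul, sum_range_succ, smul_eq_mul] at hx' hy'
  have hprev : (if m = 0 then 0 else x (m - 1)) = if m = 0 then 0 else y (m - 1) := by
    split_ifs
    exacts [rfl, hlow _ (by omega)]
  have hmid : ∑ i ∈ range p, T (m + i) m * x (m + i) = ∑ i ∈ range p, T (m + i) m * y (m + i) :=
    sum_congr rfl fun i hi => by rw [hlow _ (by simp at hi; omega)]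
  rw [hprev, hmid, hlow m (by have := NeZero.pos p; omega)] at hx'
  exact mul_left_cancel₀ (hTlow m) (by linear_combination hx' - hy')

theorem Matrix.exists_vecMul_eq_smul_of_mulVec_eq_smul {n : Type*} [Fintype n] [DecidableEq n]
    {M : Matrix n n K} {v : n → K} {μ : K} (hv : v ≠ 0) (h : M *ᵥ v = μ • v) :
    ∃ w ≠ 0, w ᵥ* M = μ • w := by
  have hdet : (μ • 1 - M).det = 0 := exists_mulVec_eq_zero_iff.mp
    ⟨v, hv, by rw [sub_mulVec, smul_mulVec, one_mulVec, h, sub_self]⟩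
  obtain ⟨w, hw0, hw⟩ := exists_vecMul_eq_zero_iff.mpr hdet
  exact ⟨w, hw0, by rw [vecMul_sub, vecMul_smul, vecMul_one, sub_eq_zero] at hw; exact hw.symm⟩

theorem exists_eq_dotProduct_of_bandVecMul_eq [NeZero p] (hTlow : ∀ n, T (n + p) n ≠ 0) {μ : K}
    {α : ℕ → Fin p → K} (hα : ∀ n, bandVecMul T p α n = μ • α n)
    (hα0 : ∀ (a : Fin p) (j : ℕ), j < a → α j a = 0) (hα1 : ∀ a : Fin p, α a a = 1)
    {N : ℕ} {u : ℕ → K} (hu : ∀ n ≤ N, bandVecMul T p u n = μ • u n) :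
    ∃ c : Fin p → K, ∀ n ≤ N + p, u n = c ⬝ᵥ α n := by
  set S : Matrix (Fin p) (Fin p) K := of fun j a => α j a
  have hS : IsUnit S := by
    rw [isUnit_iff_isUnit_det, det_of_isLowerTriangular S fun j a h => hα0 a j h]
    simp [S, hα1]
  obtain ⟨c, hc⟩ := mulVec_surjective_iff_isUnit.mpr hS fun j => u j
  refine ⟨c, eq_of_bandVecMul_eq hTlow hu (fun n _ => ?_) fun n hn => ?_⟩
  · rw [show (fun m => c ⬝ᵥ α m) = dotProductBilin K K c ∘ α from rfl,
      bandVecMul_comp_linearMap, hα, map_smul]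
    rfl
  · simpa [S, mulVec, dotProduct_comm] using (congrFun hc ⟨n, hn⟩).symm

/-- For `α n = (A^{(a)}_n(λ))_a` this is `Q_{n,N}(λ)`. -/
def tailDet [NeZero p] (α : ℕ → Fin p → K) (N n : ℕ) : K :=
  ((of fun i : Fin p => α (N + i)).updateRow 0 (α n)).det

theorem tailDet_eq_zero [NeZero p] {α : ℕ → Fin p → K} {N : ℕ} {c : Fin p → K} (hc0 : c ≠ 0)
    (hc : ∀ k, 1 ≤ k → k ≤ p → c ⬝ᵥ α (N + k) = 0) {k : ℕ} (hk1 : 1 ≤ k) (hkp : k ≤ p) :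
    tailDet α N (N + k) = 0 := by
  refine exists_mulVec_eq_zero_iff.mp ⟨c, hc0, funext fun i => ?_⟩
  rcases eq_or_ne i 0 with rfl | hi
  · simp [mulVec, dotProduct_comm, hc k hk1 hkp]
  · simpa [updateRow_ne hi, mulVec, dotProduct_comm] using
      hc i (Nat.one_le_iff_ne_zero.mpr (Fin.val_ne_zero_iff.mpr hi)) i.is_lt.le

theorem sum_range_tailDet_mul_eq [NeZero p] (hT1 : ∀ n, T n (n + 1) = 1)
    (hTsup : ∀ n m, n + 1 < m → T n m = 0) (hTsub : ∀ n m, m + p < n → T n m = 0) {μ : K}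
    {α : ℕ → Fin p → K} (hα : ∀ n, bandVecMul T p α n = μ • α n) {N : ℕ} {c : Fin p → K}
    (hc0 : c ≠ 0) (hc : ∀ k, 1 ≤ k → k ≤ p → c ⬝ᵥ α (N + k) = 0) {j : ℕ} (hj : j ≤ N) :
    ∑ m ∈ range (N + 1), tailDet α N m * T m j = μ * tailDet α N j := by
  let L := (detRowAlternating : (Fin p → K) [⋀^Fin p]→ₗ[K] K).toMultilinearMap.toLinearMap
    (of fun i : Fin p => α (N + i)) 0
  have hL : ∀ n, L (α n) = tailDet α N n := fun n => rfl
  have hcol : ∑ m ∈ range (N + 1), T m j • α m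
      + ∑ k ∈ range p, T (N + 1 + k) j • α (N + 1 + k) = μ • α j := by
    rw [← sum_range_add, sum_range_smul_eq_bandVecMul hT1 hTsup hTsub α (by omega), hα]
  have := congrArg L hcol
  simp only [map_add, map_sum, map_smul, hL, smul_eq_mul] at this
  have htail : ∑ k ∈ range p, T (N + 1 + k) j * tailDet α N (N + 1 + k) = 0 :=
    sum_eq_zero fun k hk => by
      rw [add_assoc, tailDet_eq_zero hc0 hc (by omega) (by simp at hk; omega), mul_zero]
  rw [htail, add_zero] at this
  simpa [mul_comm] using this

end BandRecurrence

section Truncation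

variable {p : ℕ} {T : ℕ → ℕ → ℝ}

theorem truncM_mulVec_apply {N : ℕ} (x : ℕ → ℝ) (n : Fin (N + 1)) :
    (truncM T N *ᵥ fun i : Fin (N + 1) => x i) n = ∑ m ∈ range (N + 1), T n m * x m := by
  simp [mulVec, dotProduct, truncM, Fin.sum_univ_eq_sum_range (fun m => T n m * x m)]

theorem vecMul_truncM_apply {N : ℕ} (x : ℕ → ℝ) (j : Fin (N + 1)) :
    ((fun i : Fin (N + 1) => x i) ᵥ* truncM T N) j = ∑ m ∈ range (N + 1), x m * T m j := by
  simp [vecMul, dotProduct, truncM, Fin.sum_univ_eq_sum_range (fun m => x m * T m j)]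

theorem truncM_mulVec_eq_smul (hT1 : ∀ n, T n (n + 1) = 1)
    (hTsup : ∀ n m, n + 1 < m → T n m = 0) (hTsub : ∀ n m, m + p < n → T n m = 0)
    {μ : ℝ} {b : ℕ → ℝ}
    (hb : ∀ n, b (n + 1) = (μ - T n n) * b n
      - ∑ j ∈ Icc 1 p, if j ≤ n then T n (n - j) * b (n - j) else 0)
    {N : ℕ} (hbN : b (N + 1) = 0) :
    truncM T N *ᵥ (fun i : Fin (N + 1) => b i) = μ • fun i : Fin (N + 1) => b i := by
  ext ⟨n, hn⟩
  have hband : ∑ m ∈ range (N + 1), T n m * b m = ∑ m ∈ range (n + 2), T n m * b m := by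
    rw [← add_zero (∑ m ∈ range (N + 1), _), ← mul_zero (T n (N + 1)), ← hbN, ← sum_range_succ]
    exact (sum_subset (range_subset_range.mpr (by omega)) fun m hm hm' => by
      rw [hTsup n m (by simp at hm'; omega), zero_mul]).symm
  rw [truncM_mulVec_apply, hband, sum_range_succ, sum_range_succ, hT1, one_mul,
    sum_range_eq_sum_Icc_of_eq_zero _ fun m hm => by rw [hTsub n m hm, zero_mul], hb n]
  simp only [Pi.smul_apply, smul_eq_mul]
  ring

theorem bandVecMul_eq_of_vecMul_truncM (hT1 : ∀ n, T n (n + 1) = 1)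
    (hTsup : ∀ n m, n + 1 < m → T n m = 0) (hTsub : ∀ n m, m + p < n → T n m = 0)
    {μ : ℝ} {N : ℕ} {u : ℕ → ℝ} (huN : ∀ n, N < n → u n = 0)
    (hu : (fun i : Fin (N + 1) => u i) ᵥ* truncM T N = μ • fun i : Fin (N + 1) => u i)
    {n : ℕ} (hn : n ≤ N) :
    bandVecMul T p u n = μ • u n := by
  have hcol := congrFun hu ⟨n, by omega⟩
  rw [vecMul_truncM_apply] at hcol
  have htail : ∑ k ∈ range p, T (N + 1 + k) n • u (N + 1 + k) = 0 :=
    sum_eq_zero fun k _ => by rw [huN _ (by omega), smul_zero]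
  rw [← sum_range_smul_eq_bandVecMul hT1 hTsup hTsub u (show n + p < N + 1 + p by omega),
    sum_range_add, htail, add_zero]
  simpa [mul_comm] using hcol

theorem eval_Qp {p : ℕ} [NeZero p] (A : Fin p → ℕ → ℝ[X]) (μ : ℝ) (n N : ℕ) :
    eval μ (Qp p A n N) = tailDet (fun m a => eval μ (A a m)) N n := by
  rw [Qp, ← coe_evalRingHom, RingHom.map_det]
  congr 1
  ext i a
  rcases eq_or_ne i 0 with rfl | hi
  · simp
  · simp [hi]

end Truncation

theorem stmt_4_general
    (p : ℕ) (hp : 1 ≤ p)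
    (T : ℕ → ℕ → ℝ)
    (hT1 : ∀ n, T n (n + 1) = 1)
    (hTsup : ∀ n m, n + 1 < m → T n m = 0)
    (hTsub : ∀ n m, m + p < n → T n m = 0)
    (hTlow : ∀ n, p ≤ n → T n (n - p) ≠ 0)
    (B : ℕ → Polynomial ℝ)
    (hB0 : B 0 = 1)
    (hBrec : ∀ n, B (n + 1) = (X - C (T n n)) * B n
      - ∑ j ∈ Finset.Icc 1 p, (if j ≤ n then C (T n (n - j)) * B (n - j) else 0))
    (A : Fin p → ℕ → Polynomial ℝ)
    (hAzero : ∀ a : Fin p, ∀ j : ℕ, j < (a : ℕ) → A a j = 0)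
    (hAone : ∀ a : Fin p, A a (a : ℕ) = 1)
    (hArec : ∀ a : Fin p, ∀ n : ℕ,
      (if n = 0 then 0 else A a (n - 1))
        + ∑ i ∈ Finset.range (p + 1), C (T (n + i) n) * A a (n + i) = X * A a n) :
    ∀ (N : ℕ) (lam : ℝ), eval lam (B (N + 1)) = 0 →
      Matrix.vecMul (fun i : Fin (N + 1) => eval lam (Qp p A (i : ℕ) N)) (truncM T N)
        = lam • (fun i : Fin (N + 1) => eval lam (Qp p A (i : ℕ) N)) := by
  intro N μ hBN
  have : NeZero p := ⟨by omega⟩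
  set α : ℕ → Fin p → ℝ := fun n a => eval μ (A a n)
  have hα : ∀ n, bandVecMul T p α n = μ • α n := fun n => by
    ext a
    simpa [bandVecMul, α, ite_apply, apply_ite (eval μ), eval_finsetSum] using
      congrArg (eval μ) (hArec a n)
  have hb := truncM_mulVec_eq_smul hT1 hTsup hTsub (μ := μ) (b := fun n => eval μ (B n))
    (fun n => by simpa [apply_ite (eval μ), eval_finsetSum] using congrArg (eval μ) (hBrec n)) hBN
  obtain ⟨w, hw0, hw⟩ := exists_vecMul_eq_smul_of_mulVec_eq_smul
    (fun h => by simpa [hB0] using congrFun h 0) hb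
  set u : ℕ → ℝ := fun n => if h : n < N + 1 then w ⟨n, h⟩ else 0
  have hwu : w = fun i : Fin (N + 1) => u i := funext fun i => by simp only [u, dif_pos i.is_lt]
  have huN : ∀ n, N < n → u n = 0 := fun n hn => dif_neg (by omega)
  obtain ⟨c, hc⟩ := exists_eq_dotProduct_of_bandVecMul_eq
    (fun n => by simpa using hTlow (n + p) (by omega)) hα
    (fun a j hj => by simp [α, hAzero a j hj]) (fun a => by simp [α, hAone a])
    fun n hn => bandVecMul_eq_of_vecMul_truncM hT1 hTsup hTsub huN (hwu ▸ hw) hn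
  have hc0 : c ≠ 0 := by
    rintro rfl
    exact hw0 (by ext i; simpa [hwu] using hc i (by omega))
  ext j
  simp only [vecMul_truncM_apply, eval_Qp, Pi.smul_apply, smul_eq_mul]
  exact sum_range_tailDet_mul_eq hT1 hTsup hTsub hα hc0
    (fun k hk1 hkp => by rw [← hc _ (by omega), huN _ (by omega)]) (by omega)

theorem stmt_4
    (p : ℕ) (hp : 1 ≤ p)
    (T : ℕ → ℕ → ℝ)
    (hT1 : ∀ n, T n (n + 1) = 1)
    (hTsup : ∀ n m, n + 1 < m → T n m = 0)
    (hTsub : ∀ n m, m + p < n → T n m = 0)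
    (hTlow : ∀ n, p ≤ n → T n (n - p) ≠ 0)
    (B : ℕ → Polynomial ℝ)
    (hB0 : B 0 = 1)
    (hBrec : ∀ n, B (n + 1) = (X - C (T n n)) * B n
      - ∑ j ∈ Finset.Icc 1 p, (if j ≤ n then C (T n (n - j)) * B (n - j) else 0))
    (A : Fin p → ℕ → Polynomial ℝ)
    (hAconst : ∀ a : Fin p, ∀ j < p, ∃ c : ℝ, A a j = C c)
    (hAzero : ∀ a : Fin p, ∀ j : ℕ, j < (a : ℕ) → A a j = 0)
    (hAone : ∀ a : Fin p, A a (a : ℕ) = 1)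
    (hArec : ∀ a : Fin p, ∀ n : ℕ,
      (if n = 0 then 0 else A a (n - 1))
        + ∑ i ∈ Finset.range (p + 1), C (T (n + i) n) * A a (n + i) = X * A a n) :
    ∀ (N : ℕ) (lam : ℝ), eval lam (B (N + 1)) = 0 →
      Matrix.vecMul (fun i : Fin (N + 1) => eval lam (Qp p A (i : ℕ) N)) (truncM T N)
        = lam • (fun i : Fin (N + 1) => eval lam (Qp p A (i : ℕ) N)) :=
  stmt_4_general p hp T hT1 hTsup hTsub hTlow B hB0 hBrec A hAzero hAone hArec
end

section
/- (Christoffel–Darboux formulas) For every N ≥ 0 the following hold: (i) the two-variable polynomial identity (x − y)·Σ_{n=0}^{N} Q_{n,N}(x)·B_n(y) = h_N^{−1}·(B_{N+1}(x)·B_N(y) − B_N(x)·B_{N+1}(y)); (ii) the confluent identity Σ_{n=0}^{N} Q_{n,N}·B_n = h_N^{−1}·(B'_{N+1}·B_N − B'_N·B_{N+1}), where ' denotes the derivative of a polynomial. -/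
/-!
Both sequences are eigenvectors of the banded Hessenberg matrix `T`: `n ↦ B n (y)` is a right
eigenvector for the eigenvalue `y` (the type II recurrence) and, since the determinant is linear in
its first row, `n ↦ Q_{n,N}(x)` is a left eigenvector for `x` (the type I recurrence). Pairing the
two over the block `n ≤ N` makes `(x - y) ∑ Q_{n,N}(x) B_n(y)` telescope to two boundary terms:
`Q_{N,N}(x) B_{N+1}(y)` from the superdiagonal and `T_{N+p,N} Q_{N+p,N}(x) B_N(y)` from the lowest
band, because `Q_{m,N}` has a repeated row for `N < m < N + p`. A cyclic permutation of rows gives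
`Q_{N+p,N} = (-1)^(p-1) Q_{N+1,N+1}`, and the case `x = y` then yields `Q_{N,N} = h_N⁻¹ B_N` by
induction on `N`. The confluent form is the derivative at `X = y` of `(X - y) ∑ Q_{n,N} B_n(y)`.
-/

open Polynomial

open Finset

theorem Polynomial.eval_eq_eval_derivative_of_X_sub_C_mul_eq {R : Type*} [CommRing R]
    {f g : R[X]} {y : R} (h : (X - C y) * f = g) : eval y f = eval y (derivative g) := by
  simp [← h, derivative_mul]

structure IsBandedHessenberg {R : Type*} [Zero R] [One R] (p : ℕ) (T : ℕ → ℕ → R) : Prop where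
  apply_succ : ∀ n, T n (n + 1) = 1
  eq_zero_of_lt : ∀ n m, n + 1 < m → T n m = 0
  eq_zero_of_gt : ∀ n m, m + p < n → T n m = 0

namespace IsBandedHessenberg

variable {R : Type*} [CommRing R] {p : ℕ} {T : ℕ → ℕ → R}

theorem sum_range_mul_col (hT : IsBandedHessenberg p T) (f : ℕ → R) {n K : ℕ}
    (hK : n + p + 1 ≤ K) :
    ∑ m ∈ range K, T m n * f m
      = (if n = 0 then 0 else f (n - 1)) + ∑ i ∈ range (p + 1), T (n + i) n * f (n + i) := by
  obtain ⟨L, rfl⟩ : ∃ L, K = n + (p + 1 + L) := ⟨K - (n + p + 1), by omega⟩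
  have hbelow : ∑ i ∈ range L, T (n + (p + 1 + i)) n * f (n + (p + 1 + i)) = 0 :=
    sum_eq_zero fun i _ => by rw [hT.eq_zero_of_gt _ _ (by omega), zero_mul]
  rw [sum_range_add, sum_range_add, hbelow, add_zero]
  congr 1
  rcases n with _ | k
  · simp
  · rw [sum_range_succ, sum_eq_zero fun m hm => ?_, hT.apply_succ, one_mul, zero_add,
      if_neg k.succ_ne_zero, Nat.add_sub_cancel]
    rw [hT.eq_zero_of_lt _ _ (by simp only [mem_range] at hm; omega), zero_mul]

theorem sum_range_mul_row (hT : IsBandedHessenberg p T) (f : ℕ → R) {n K : ℕ} (hK : n + 2 ≤ K) :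
    ∑ m ∈ range K, T n m * f m
      = f (n + 1) + T n n * f n
        + ∑ j ∈ Icc 1 p, if j ≤ n then T n (n - j) * f (n - j) else 0 := by
  obtain ⟨L, rfl⟩ : ∃ L, K = n + 2 + L := ⟨K - (n + 2), by omega⟩
  have habove : ∑ i ∈ range L, T n (n + 2 + i) * f (n + 2 + i) = 0 :=
    sum_eq_zero fun i _ => by rw [hT.eq_zero_of_lt _ _ (by omega), zero_mul]
  have hlower : ∑ j ∈ Icc 1 p, (if j ≤ n then T n (n - j) * f (n - j) else 0)
      = ∑ m ∈ range n, T n m * f m := by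
    rw [← sum_filter]
    refine sum_bij_ne_zero (fun j _ _ => n - j) (fun j hj _ => ?_) (fun j₁ hj₁ _ j₂ hj₂ _ h => ?_)
      (fun m hm hne => ?_) fun _ _ _ => rfl
    · simp only [mem_filter, mem_Icc] at hj
      exact mem_range.mpr (by omega)
    · simp only [mem_filter, mem_Icc] at hj₁ hj₂
      omega
    · rw [mem_range] at hm
      have hmp : n ≤ m + p := by
        by_contra! h
        exact hne (by rw [hT.eq_zero_of_gt _ _ h, zero_mul])
      exact ⟨n - m, by simp only [mem_filter, mem_Icc]; omega,
        by rwa [Nat.sub_sub_self hm.le], Nat.sub_sub_self hm.le⟩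
  rw [sum_range_add, habove, add_zero, sum_range_succ, sum_range_succ, hT.apply_succ, one_mul,
    hlower]
  ring

theorem sub_mul_sum_mul (hT : IsBandedHessenberg p T) (hp : 1 ≤ p) {x y : R} {q b : ℕ → R}
    {N : ℕ} (hq : ∀ n ≤ N, x * q n = ∑ m ∈ range (N + 1 + p), T m n * q m)
    (hb : ∀ n ≤ N, y * b n = ∑ m ∈ range (N + 1 + p), T n m * b m)
    (hq0 : ∀ m, N < m → m < N + p → q m = 0) :
    (x - y) * ∑ n ∈ range (N + 1), q n * b n
      = T (N + p) N * q (N + p) * b N - q N * b (N + 1) := by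
  set f : ℕ → ℕ → R := fun m n => T m n * q m * b n
  have hx : ∑ n ∈ range (N + 1), x * q n * b n
      = ∑ n ∈ range (N + 1), ∑ m ∈ range (N + 1 + p), f m n :=
    sum_congr rfl fun n hn => by rw [hq n (by simpa [Nat.lt_succ_iff] using hn), sum_mul]
  have hy : ∑ n ∈ range (N + 1), q n * (y * b n)
      = ∑ n ∈ range (N + 1), ∑ m ∈ range (N + 1 + p), f n m :=
    sum_congr rfl fun n hn => by
      rw [hb n (by simpa [Nat.lt_succ_iff] using hn), mul_sum]
      exact sum_congr rfl fun m _ => by ring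
  -- the terms with both indices `≤ N` cancel, leaving the part of `T` outside the block
  have hblock : ∑ n ∈ range (N + 1), ∑ m ∈ range (N + 1 + p), f m n
      - ∑ n ∈ range (N + 1), ∑ m ∈ range (N + 1 + p), f n m
      = ∑ n ∈ range (N + 1), ∑ i ∈ range p, f (N + 1 + i) n
        - ∑ n ∈ range (N + 1), ∑ i ∈ range p, f n (N + 1 + i) := by
    generalize N + 1 = a
    simp only [sum_range_add, sum_add_distrib]
    rw [sum_comm (s := range a) (t := range a) (f := fun n m => f m n)]
    ring
  have hlower : ∑ n ∈ range (N + 1), ∑ i ∈ range p, f (N + 1 + i) n = f (N + p) N := by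
    have hinner : ∀ n, ∑ i ∈ range p, f (N + 1 + i) n = f (N + p) n := fun n => by
      rw [sum_eq_single_of_mem (p - 1) (mem_range.mpr (by omega)) fun i hi hne => ?_]
      · rw [show N + 1 + (p - 1) = N + p by omega]
      · rw [mem_range] at hi
        simp only [f, hq0 (N + 1 + i) (by omega) (by omega), mul_zero, zero_mul]
    simp only [hinner]
    refine sum_eq_single_of_mem N (self_mem_range_succ N) fun n hn hne => ?_
    simp only [f, hT.eq_zero_of_gt (N + p) n (by simp only [mem_range] at hn; omega), zero_mul]
  have hupper : ∑ n ∈ range (N + 1), ∑ i ∈ range p, f n (N + 1 + i) = q N * b (N + 1) := by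
    rw [sum_eq_single_of_mem N (self_mem_range_succ N) fun n hn hne => sum_eq_zero fun i _ => ?_,
      sum_eq_single_of_mem 0 (mem_range.mpr (by omega)) fun i _ hi => ?_]
    · simp [f, hT.apply_succ]
    · simp only [f, hT.eq_zero_of_lt N (N + 1 + i) (by omega), zero_mul]
    · rw [mem_range] at hn
      simp only [f, hT.eq_zero_of_lt n (N + 1 + i) (by omega), zero_mul]
  calc (x - y) * ∑ n ∈ range (N + 1), q n * b n
      = ∑ n ∈ range (N + 1), x * q n * b n - ∑ n ∈ range (N + 1), q n * (y * b n) := by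
        rw [sub_mul, mul_sum, mul_sum, ← sum_sub_distrib, ← sum_sub_distrib]
        exact sum_congr rfl fun n _ => by ring
    _ = f (N + p) N - q N * b (N + 1) := by rw [hx, hy, hblock, hlower, hupper]

end IsBandedHessenberg

section Determinant

variable {p : ℕ} (A : Fin p → ℕ → ℝ[X])

theorem Qp_zero_zero (hAzero : ∀ a : Fin p, ∀ j : ℕ, j < (a : ℕ) → A a j = 0)
    (hAone : ∀ a : Fin p, A a (a : ℕ) = 1) : Qp p A 0 0 = 1 := by
  have hdiag : (Matrix.of fun i a : Fin p => if (i : ℕ) = 0 then A a 0 else A a (0 + i))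
      = Matrix.of fun (i a : Fin p) => A a (i : ℕ) := by
    refine Matrix.ext fun i a => ?_
    simp only [Matrix.of_apply]
    split_ifs with hi <;> simp [hi]
  unfold Qp
  rw [hdiag]
  refine (Matrix.det_of_isLowerTriangular _ fun i a hia => hAzero a i hia).trans ?_
  exact prod_eq_one fun i _ => hAone i

variable [NeZero p]

theorem Qp_eq_det_updateRow (n N : ℕ) :
    Qp p A n N = ((Matrix.of fun i a : Fin p => A a (N + i)).updateRow 0 fun a => A a n).det := by
  unfold Qp
  congr 1
  ext i a
  rcases eq_or_ne i 0 with rfl | hi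
  · simp
  · simp [hi]

theorem X_mul_Qp {T : ℕ → ℕ → ℝ} (hArec : ∀ a : Fin p, ∀ n : ℕ,
      (if n = 0 then 0 else A a (n - 1))
        + ∑ i ∈ range (p + 1), C (T (n + i) n) * A a (n + i) = X * A a n)
    (n N : ℕ) :
    X * Qp p A n N = (if n = 0 then 0 else Qp p A (n - 1) N)
      + ∑ i ∈ range (p + 1), C (T (n + i) n) * Qp p A (n + i) N := by
  let L : (Fin p → ℝ[X]) →ₗ[ℝ[X]] ℝ[X] :=
    Matrix.detRowAlternating.toMultilinearMap.toLinearMap (Matrix.of fun i a => A a (N + i)) 0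
  have hL : ∀ m, L (fun a => A a m) = Qp p A m N := fun m => by
    rw [Qp_eq_det_updateRow]; rfl
  have hrow : (X : ℝ[X]) • (fun a => A a n) = (if n = 0 then 0 else fun a => A a (n - 1))
      + ∑ i ∈ range (p + 1), C (T (n + i) n) • fun a => A a (n + i) := by
    funext a
    rw [Pi.smul_apply, smul_eq_mul, ← hArec a n]
    split_ifs <;> simp
  rw [← hL, ← smul_eq_mul, ← map_smul, hrow, map_add, map_sum, apply_ite L, map_zero, hL]
  simp only [map_smul, hL, smul_eq_mul]

theorem Qp_eq_zero_of_lt_of_lt {m N : ℕ} (hNm : N < m) (hmN : m < N + p) : Qp p A m N = 0 :=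
  Matrix.det_zero_of_row_eq (i := 0) (j := ⟨m - N, by omega⟩)
    (Fin.ne_of_val_ne (by simp only [Fin.val_zero]; omega))
    (funext fun a => by simp [Nat.add_sub_of_le hNm.le])

theorem Qp_add_self (N : ℕ) : Qp p A (N + p) N = (-1) ^ (p - 1) * Qp p A (N + 1) (N + 1) := by
  obtain ⟨k, rfl⟩ := Nat.exists_eq_succ_of_ne_zero (NeZero.ne p)
  let M : Matrix (Fin (k + 1)) (Fin (k + 1)) ℝ[X] := Matrix.of fun i a => A a (N + 1 + i)
  have hM : Qp (k + 1) A (N + 1) (N + 1) = M.det := by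
    unfold Qp
    congr 1
    refine Matrix.ext fun i a => ?_
    simp only [Matrix.of_apply]
    split_ifs with hi <;> simp [M, hi]
  have hrot : Qp (k + 1) A (N + (k + 1)) N = (M.submatrix (finRotate _).symm id).det := by
    unfold Qp
    congr 1
    refine Matrix.ext fun i a => ?_
    rcases eq_or_ne i 0 with rfl | hi
    · rw [show N + (k + 1) = N + 1 + k by omega]
      simp [M]
    · have hi' : (i : ℕ) ≠ 0 := Fin.val_ne_zero_iff.mpr hi
      simp only [M, Matrix.submatrix_apply, Matrix.of_apply, id, if_neg hi',
        coe_finRotate_symm_of_ne_zero hi]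
      congr 1
      omega
  rw [hrot, hM, Matrix.det_permute, Equiv.Perm.sign_symm, sign_finRotate]
  simp

end Determinant

namespace ChristoffelDarboux

theorem monic_and_natDegree_eq {p : ℕ} {T : ℕ → ℕ → ℝ} {B : ℕ → ℝ[X]} (hB0 : B 0 = 1)
    (hBrec : ∀ n, B (n + 1) = (X - C (T n n)) * B n
      - ∑ j ∈ Icc 1 p, (if j ≤ n then C (T n (n - j)) * B (n - j) else 0)) (n : ℕ) :
    (B n).Monic ∧ (B n).natDegree = n := by
  induction n using Nat.strong_induction_on with
  | _ n ih =>
    rcases n with _ | m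
    · simp [hB0]
    obtain ⟨hm, hdm⟩ := ih m (by omega)
    have hlead : ((X - C (T m m)) * B m).Monic := (monic_X_sub_C _).mul hm
    have hdeg : ((X - C (T m m)) * B m).natDegree = m + 1 := by
      rw [(monic_X_sub_C _).natDegree_mul hm, natDegree_X_sub_C, hdm, add_comm]
    have hlower : (∑ j ∈ Icc 1 p,
        (if j ≤ m then C (T m (m - j)) * B (m - j) else 0)).natDegree ≤ m := by
      refine natDegree_sum_le_of_forall_le _ _ fun j hj => ?_
      split_ifs with hjm
      · refine (natDegree_C_mul_le _ _).trans ?_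
        rw [(ih (m - j) (by simp only [mem_Icc] at hj; omega)).2]
        omega
      · simp
    rw [hBrec m]
    exact ⟨hlead.sub_of_left (degree_lt_degree (by omega)),
      (natDegree_sub_eq_left_of_natDegree_lt (by omega)).trans hdeg⟩

noncomputable def normalizer (p : ℕ) (T : ℕ → ℕ → ℝ) (n : ℕ) : ℝ :=
  (-1) ^ ((p - 1) * n) * ∏ i ∈ range n, T (i + p) i

theorem normalizer_zero (p : ℕ) (T : ℕ → ℕ → ℝ) : normalizer p T 0 = 1 := by
  simp [normalizer]

theorem normalizer_succ (p : ℕ) (T : ℕ → ℕ → ℝ) (n : ℕ) :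
    normalizer p T (n + 1) = (-1) ^ (p - 1) * T (n + p) n * normalizer p T n := by
  simp only [normalizer, prod_range_succ, mul_add, mul_one, pow_add]
  ring

variable {p : ℕ} [NeZero p] {T : ℕ → ℕ → ℝ} {B : ℕ → ℝ[X]} (A : Fin p → ℕ → ℝ[X])

theorem sub_mul_sum_eval_Qp_mul_eval (hT : IsBandedHessenberg p T)
    (hBrec : ∀ n, B (n + 1) = (X - C (T n n)) * B n
      - ∑ j ∈ Icc 1 p, (if j ≤ n then C (T n (n - j)) * B (n - j) else 0))
    (hArec : ∀ a : Fin p, ∀ n : ℕ,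
      (if n = 0 then 0 else A a (n - 1))
        + ∑ i ∈ range (p + 1), C (T (n + i) n) * A a (n + i) = X * A a n)
    (N : ℕ) (x y : ℝ) :
    (x - y) * ∑ n ∈ range (N + 1), eval x (Qp p A n N) * eval y (B n)
      = T (N + p) N * eval x (Qp p A (N + p) N) * eval y (B N)
        - eval x (Qp p A N N) * eval y (B (N + 1)) := by
  have hp : 1 ≤ p := NeZero.one_le
  refine hT.sub_mul_sum_mul hp (fun n hn => ?_) (fun n hn => ?_)
    fun m hNm hmN => by rw [Qp_eq_zero_of_lt_of_lt A hNm hmN, eval_zero]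
  · rw [hT.sum_range_mul_col _ (by omega)]
    simpa [eval_finsetSum, apply_ite (eval x)] using congrArg (eval x) (X_mul_Qp A hArec n N)
  · rw [hT.sum_range_mul_row _ (by omega)]
    have := congrArg (eval y) (hBrec n)
    simp only [eval_sub, eval_mul, eval_X, eval_C, eval_finsetSum, apply_ite (eval y),
      eval_zero] at this
    rw [this]
    ring

theorem C_mul_Qp_add_self_eq_iff (hTlow : ∀ n, p ≤ n → T n (n - p) ≠ 0) (N : ℕ) (f : ℝ[X]) :
    C (T (N + p) N) * Qp p A (N + p) N = C (normalizer p T N)⁻¹ * f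
      ↔ Qp p A (N + 1) (N + 1) = C (normalizer p T (N + 1))⁻¹ * f := by
  have hc : (-1) ^ (p - 1) * T (N + p) N ≠ 0 := by simpa using hTlow (N + p) (by omega)
  have hlhs : C (T (N + p) N) * ((-1) ^ (p - 1) * Qp p A (N + 1) (N + 1))
      = ((-1) ^ (p - 1) * T (N + p) N) • Qp p A (N + 1) (N + 1) := by
    simp only [smul_eq_C_mul, C_mul, C_pow, C_neg, C_1]
    ring
  rw [Qp_add_self, hlhs, normalizer_succ, mul_inv, C_mul, mul_assoc,
    ← smul_eq_C_mul ((-1) ^ (p - 1) * T (N + p) N)⁻¹, eq_inv_smul_iff₀ hc]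

theorem Qp_self (hT : IsBandedHessenberg p T)
    (hTlow : ∀ n, p ≤ n → T n (n - p) ≠ 0) (hB0 : B 0 = 1)
    (hBrec : ∀ n, B (n + 1) = (X - C (T n n)) * B n
      - ∑ j ∈ Icc 1 p, (if j ≤ n then C (T n (n - j)) * B (n - j) else 0))
    (hAzero : ∀ a : Fin p, ∀ j : ℕ, j < (a : ℕ) → A a j = 0)
    (hAone : ∀ a : Fin p, A a (a : ℕ) = 1)
    (hArec : ∀ a : Fin p, ∀ n : ℕ,
      (if n = 0 then 0 else A a (n - 1))
        + ∑ i ∈ range (p + 1), C (T (n + i) n) * A a (n + i) = X * A a n)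
    (N : ℕ) : Qp p A N N = C (normalizer p T N)⁻¹ * B N := by
  induction N with
  | zero => rw [Qp_zero_zero A hAzero hAone, normalizer_zero, hB0, inv_one, C_1, one_mul]
  | succ N ih =>
    refine (C_mul_Qp_add_self_eq_iff A hTlow N _).mp <|
      mul_right_cancel₀ (monic_and_natDegree_eq hB0 hBrec N).1.ne_zero <|
        Polynomial.funext fun x => ?_
    -- the case `x = y` of the Christoffel–Darboux sum
    have hdiag := sub_mul_sum_eval_Qp_mul_eval A hT hBrec hArec N x x
    rw [sub_self, zero_mul, ih] at hdiag
    simp only [eval_mul, eval_C] at hdiag ⊢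
    linear_combination -hdiag

end ChristoffelDarboux

open ChristoffelDarboux

theorem stmt_5_general
    (p : ℕ) (hp : 1 ≤ p)
    (T : ℕ → ℕ → ℝ)
    (hT1 : ∀ n, T n (n + 1) = 1)
    (hTsup : ∀ n m, n + 1 < m → T n m = 0)
    (hTsub : ∀ n m, m + p < n → T n m = 0)
    (hTlow : ∀ n, p ≤ n → T n (n - p) ≠ 0)
    (B : ℕ → Polynomial ℝ)
    (hB0 : B 0 = 1)
    (hBrec : ∀ n, B (n + 1) = (X - C (T n n)) * B n
      - ∑ j ∈ Finset.Icc 1 p, (if j ≤ n then C (T n (n - j)) * B (n - j) else 0))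
    (A : Fin p → ℕ → Polynomial ℝ)
    (hAzero : ∀ a : Fin p, ∀ j : ℕ, j < (a : ℕ) → A a j = 0)
    (hAone : ∀ a : Fin p, A a (a : ℕ) = 1)
    (hArec : ∀ a : Fin p, ∀ n : ℕ,
      (if n = 0 then 0 else A a (n - 1))
        + ∑ i ∈ Finset.range (p + 1), C (T (n + i) n) * A a (n + i) = X * A a n)
    (h : ℕ → ℝ)
    (hh : ∀ n, h n = (-1 : ℝ) ^ ((p - 1) * n) * ∏ i ∈ Finset.range n, T (i + p) i) :
    ∀ N : ℕ,
      (∀ x y : ℝ,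
        (x - y) * ∑ n ∈ Finset.range (N + 1), eval x (Qp p A n N) * eval y (B n)
          = (h N)⁻¹ * (eval x (B (N + 1)) * eval y (B N)
              - eval x (B N) * eval y (B (N + 1)))) ∧
      (∑ n ∈ Finset.range (N + 1), Qp p A n N * B n
        = C (h N)⁻¹ * (derivative (B (N + 1)) * B N - derivative (B N) * B (N + 1))) := by
  have : NeZero p := ⟨by omega⟩
  have hT : IsBandedHessenberg p T := ⟨hT1, hTsup, hTsub⟩
  obtain rfl : h = normalizer p T := funext hh
  have hQ := Qp_self A hT hTlow hB0 hBrec hAzero hAone hArec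
  have hCD : ∀ N, ∀ x y : ℝ,
      (x - y) * ∑ n ∈ range (N + 1), eval x (Qp p A n N) * eval y (B n)
        = (normalizer p T N)⁻¹ * (eval x (B (N + 1)) * eval y (B N)
            - eval x (B N) * eval y (B (N + 1))) := fun N x y => by
    have hboundary := congrArg (eval x) ((C_mul_Qp_add_self_eq_iff A hTlow N _).mpr (hQ (N + 1)))
    simp only [eval_mul, eval_C] at hboundary
    rw [sub_mul_sum_eval_Qp_mul_eval A hT hBrec hArec, hboundary, hQ, eval_mul, eval_C]
    ring
  refine fun N => ⟨hCD N, Polynomial.funext fun y => ?_⟩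
  have hpoly : (X - C y) * ∑ n ∈ range (N + 1), Qp p A n N * C (eval y (B n))
      = C (normalizer p T N)⁻¹ * (B (N + 1) * C (eval y (B N)) - B N * C (eval y (B (N + 1)))) :=
    Polynomial.funext fun x => by simpa [eval_finsetSum] using hCD N x y
  simpa [eval_finsetSum] using eval_eq_eval_derivative_of_X_sub_C_mul_eq hpoly

theorem stmt_5
    (p : ℕ) (hp : 1 ≤ p)
    (T : ℕ → ℕ → ℝ)
    (hT1 : ∀ n, T n (n + 1) = 1)
    (hTsup : ∀ n m, n + 1 < m → T n m = 0)
    (hTsub : ∀ n m, m + p < n → T n m = 0)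
    (hTlow : ∀ n, p ≤ n → T n (n - p) ≠ 0)
    (B : ℕ → Polynomial ℝ)
    (hB0 : B 0 = 1)
    (hBrec : ∀ n, B (n + 1) = (X - C (T n n)) * B n
      - ∑ j ∈ Finset.Icc 1 p, (if j ≤ n then C (T n (n - j)) * B (n - j) else 0))
    (A : Fin p → ℕ → Polynomial ℝ)
    (hAconst : ∀ a : Fin p, ∀ j < p, ∃ c : ℝ, A a j = C c)
    (hAzero : ∀ a : Fin p, ∀ j : ℕ, j < (a : ℕ) → A a j = 0)
    (hAone : ∀ a : Fin p, A a (a : ℕ) = 1)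
    (hArec : ∀ a : Fin p, ∀ n : ℕ,
      (if n = 0 then 0 else A a (n - 1))
        + ∑ i ∈ Finset.range (p + 1), C (T (n + i) n) * A a (n + i) = X * A a n)
    (h : ℕ → ℝ)
    (hh : ∀ n, h n = (-1 : ℝ) ^ ((p - 1) * n) * ∏ i ∈ Finset.range n, T (i + p) i) :
    ∀ N : ℕ,
      (∀ x y : ℝ,
        (x - y) * ∑ n ∈ Finset.range (N + 1), eval x (Qp p A n N) * eval y (B n)
          = (h N)⁻¹ * (eval x (B (N + 1)) * eval y (B N)
              - eval x (B N) * eval y (B (N + 1)))) ∧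
      (∑ n ∈ Finset.range (N + 1), Qp p A n N * B n
        = C (h N)⁻¹ * (derivative (B (N + 1)) * B N - derivative (B N) * B (N + 1))) :=
  stmt_5_general p hp T hT1 hTsup hTsub hTlow B hB0 hBrec A hAzero hAone hArec h hh
end

section
/- Assume B_{N+1} has N+1 simple real zeros λ_1 > ⋯ > λ_{N+1}. Let 𝒰 be the (N+1)×(N+1) matrix with entries 𝒰_{n,k} = B_{n−1}(λ_k) and let 𝒲 be the (N+1)×(N+1) matrix with entries 𝒲_{k,n} = w_{k,n} (rows indexed by k, columns by n, both from 1 to N+1). Then 𝒰·𝒲 = 𝒲·𝒰 = I_{N+1}, and for every n ≥ 0, 𝒰·Dⁿ·𝒲 = (T^{[N]})ⁿ, where D = diag(λ_1, …, λ_{N+1}). -/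
/-!
For every root `λ` of `B_{N+1}` the vector `(B_0(λ), …, B_N(λ))` is a right eigenvector of
`T^{[N]}`, so `𝒰 D = T^{[N]} 𝒰`, and everything follows from `𝒲 𝒰 = I`.

The sequence `q_n = Q_{n,N}` solves the type I recurrence (`Q` is linear in its first row) and
vanishes for `N < n < N + p` (two equal rows). Summing the type I recurrence of `q` against the
type II recurrence of `B` over `0 ≤ n ≤ N` therefore leaves only boundary terms
(Christoffel–Darboux):
`(y - x) ∑ q_n(y) B_n(x) = T_{N+p,N} q_{N+p}(y) B_N(x) - q_N(y) B_{N+1}(x)`.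
At a root `λ` of `B_{N+1}` the coefficient `T_{N+p,N} q_{N+p}(λ)` must vanish: otherwise also
`B_N(λ) = 0`, and differentiating this identity and its diagonal version `y = x` at `λ` gives
`∑ q_n(λ) B_n(λ) = 0`, which is excluded. Hence `∑ q_n(λ_k) B_n(λ_j) = 0` for `k ≠ j`, which
is `𝒲 𝒰 = I` once the rows of `(q_n(λ_k))` are normalised.
-/

open Polynomial

noncomputable def wfun (p : ℕ) (A : Fin p → ℕ → Polynomial ℝ) (B : ℕ → Polynomial ℝ)
    (N : ℕ) (lam : Fin (N + 1) → ℝ) (k : Fin (N + 1)) (n : ℕ) : ℝ :=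
  Polynomial.eval (lam k) (Qp p A n N) /
    ∑ l ∈ Finset.range (N + 1),
      Polynomial.eval (lam k) (Qp p A l N) * Polynomial.eval (lam k) (B l)

noncomputable def calU (B : ℕ → Polynomial ℝ) (N : ℕ) (lam : Fin (N + 1) → ℝ) :
    Matrix (Fin (N + 1)) (Fin (N + 1)) ℝ :=
  Matrix.of fun n k : Fin (N + 1) => Polynomial.eval (lam k) (B (n : ℕ))

noncomputable def calW (p : ℕ) (A : Fin p → ℕ → Polynomial ℝ) (B : ℕ → Polynomial ℝ)
    (N : ℕ) (lam : Fin (N + 1) → ℝ) : Matrix (Fin (N + 1)) (Fin (N + 1)) ℝ :=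
  Matrix.of fun k n : Fin (N + 1) => wfun p A B N lam k (n : ℕ)

section Recurrences

variable {R : Type*} [CommRing R] {p : ℕ} {T : ℕ → ℕ → R}

structure IsBandedHessenberg_s6 (p : ℕ) (T : ℕ → ℕ → R) : Prop where
  superdiag : ∀ n, T n (n + 1) = 1
  upper : ∀ n m, n + 1 < m → T n m = 0
  lower : ∀ n m, m + p < n → T n m = 0

theorem IsBandedHessenberg_s6.map {S : Type*} [CommRing S] (hT : IsBandedHessenberg_s6 p T)
    (f : R →+* S) : IsBandedHessenberg_s6 p fun n m => f (T n m) where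
  superdiag n := by simp [hT.superdiag]
  upper n m h := by simp [hT.upper n m h]
  lower n m h := by simp [hT.lower n m h]

def IsTypeIIRecurrence (p : ℕ) (T : ℕ → ℕ → R) (x : R) (b : ℕ → R) : Prop :=
  ∀ n, b (n + 1) = (x - T n n) * b n
    - ∑ j ∈ Finset.Icc 1 p, (if j ≤ n then T n (n - j) * b (n - j) else 0)

def IsTypeIRecurrence (p : ℕ) (T : ℕ → ℕ → R) (s : R) (a : ℕ → R) : Prop :=
  ∀ n, (if n = 0 then 0 else a (n - 1))
    + ∑ i ∈ Finset.range (p + 1), T (n + i) n * a (n + i) = s * a n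

theorem sum_Icc_ite_eq_sum_range (n : ℕ) (f : ℕ → R) (hf : ∀ m, m + p < n → f m = 0) :
    ∑ j ∈ Finset.Icc 1 p, (if j ≤ n then f (n - j) else 0) = ∑ m ∈ Finset.range n, f m := by
  have hle {j : ℕ} (hj : (if j ≤ n then f (n - j) else 0) ≠ 0) : j ≤ n := by
    by_contra h
    exact hj (if_neg h)
  refine Finset.sum_bij_ne_zero (fun j _ _ => n - j) ?_ ?_ ?_ ?_
  · intro j hj hne
    simp only [Finset.mem_Icc, Finset.mem_range] at hj ⊢
    have := hle hne
    omega
  · intro j₁ _ hne₁ j₂ _ hne₂ h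
    have := hle hne₁
    have := hle hne₂
    omega
  · intro m hm hne
    have hmp : n ≤ m + p := by by_contra h; exact hne (hf m (by omega))
    simp only [Finset.mem_range] at hm
    refine ⟨n - m, Finset.mem_Icc.2 ⟨by omega, by omega⟩, ?_, by omega⟩
    rwa [if_pos (by omega), Nat.sub_sub_self hm.le]
  · intro j _ hne
    rw [if_pos (hle hne)]

theorem IsTypeIIRecurrence.sum_mul_eq {b : ℕ → R} {x : R} (hb : IsTypeIIRecurrence p T x b)
    (hT : IsBandedHessenberg_s6 p T) {n K : ℕ} (hK : n + 2 ≤ K) :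
    ∑ m ∈ Finset.range K, T n m * b m = x * b n := by
  have hband : ∑ m ∈ Finset.range K, T n m * b m = ∑ m ∈ Finset.range (n + 2), T n m * b m := by
    refine (Finset.sum_subset (Finset.range_subset_range.2 hK) fun m _ hm => ?_).symm
    rw [hT.upper n m (by simp at hm; omega), zero_mul]
  rw [hband, Finset.sum_range_succ, Finset.sum_range_succ, hT.superdiag,
    ← sum_Icc_ite_eq_sum_range n _ fun m hm => by rw [hT.lower n m hm, zero_mul], hb n]
  ring

theorem IsTypeIRecurrence.sum_mul_eq {a : ℕ → R} {s : R} (ha : IsTypeIRecurrence p T s a)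
    (hT : IsBandedHessenberg_s6 p T) {m K : ℕ} (hK : m + p + 1 ≤ K) :
    ∑ n ∈ Finset.range K, a n * T n m = s * a m := by
  have hband : ∑ n ∈ Finset.range K, a n * T n m
      = ∑ n ∈ Finset.range (m + (p + 1)), a n * T n m := by
    refine (Finset.sum_subset (Finset.range_subset_range.2 (by omega)) fun n _ hn => ?_).symm
    rw [hT.lower n m (by simp at hn; omega), mul_zero]
  have hbelow : ∑ n ∈ Finset.range m, a n * T n m = if m = 0 then 0 else a (m - 1) := by
    rcases m with _ | k
    · simp
    · rw [Finset.sum_range_succ, Finset.sum_eq_zero fun n hn => by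
        rw [hT.upper n (k + 1) (by simp at hn; omega), mul_zero]]
      simp [hT.superdiag]
  rw [hband, Finset.sum_range_add, hbelow, ← ha m]
  simp only [mul_comm]

theorem IsTypeIRecurrence.map_linearMap {ι : Type*} {a : ι → ℕ → R} {s : R}
    (ha : ∀ i, IsTypeIRecurrence p T s (a i)) (f : (ι → R) →ₗ[R] R) :
    IsTypeIRecurrence p T s fun n => f fun i => a i n := by
  intro n
  have hvec : ((if n = 0 then 0 else fun i => a i (n - 1))
      + ∑ k ∈ Finset.range (p + 1), T (n + k) n • fun i => a i (n + k)) = s • fun i => a i n := by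
    funext i
    rw [Pi.smul_apply, smul_eq_mul, ← ha i n]
    split_ifs <;> simp
  rw [← smul_eq_mul, ← map_smul, ← hvec, map_add, map_sum, apply_ite f, map_zero]
  simp only [map_smul, smul_eq_mul]

theorem IsBandedHessenberg_s6.christoffel_darboux (hT : IsBandedHessenberg_s6 p T) (hp : 1 ≤ p)
    {N : ℕ} {a b : ℕ → R} {s x : R}
    (ha : ∀ m ≤ N, ∑ n ∈ Finset.range (N + p + 1), a n * T n m = s * a m)
    (hb : ∀ n ≤ N, ∑ m ∈ Finset.range (N + 2), T n m * b m = x * b n)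
    (hvan : ∀ m, N < m → m < N + p → a m = 0) :
    (s - x) * ∑ n ∈ Finset.range (N + 1), a n * b n
      = a (N + p) * T (N + p) N * b N - a N * b (N + 1) := by
  have hcol (m : ℕ) : ∑ n ∈ Finset.range (N + p + 1), a n * T n m
      = ∑ n ∈ Finset.range (N + 1), a n * T n m + a (N + p) * T (N + p) m := by
    obtain ⟨q, rfl⟩ : ∃ q, p = q + 1 := ⟨p - 1, by omega⟩
    rw [show N + (q + 1) + 1 = N + 1 + (q + 1) by ring, Finset.sum_range_add,
      Finset.sum_range_succ (fun i => a (N + 1 + i) * T (N + 1 + i) m),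
      Finset.sum_eq_zero (s := Finset.range q) fun i hi => by
        rw [hvan _ (by omega) (by simp at hi; omega), zero_mul],
      zero_add, show N + 1 + q = N + (q + 1) by ring]
  have hlast_col : ∑ m ∈ Finset.range (N + 1), a (N + p) * T (N + p) m * b m
      = a (N + p) * T (N + p) N * b N :=
    Finset.sum_eq_single_of_mem N (by simp) fun m hm _ => by
      rw [hT.lower _ _ (by simp at hm; omega), mul_zero, zero_mul]
  have hlast_row : ∑ n ∈ Finset.range (N + 1), a n * (T n (N + 1) * b (N + 1))
      = a N * b (N + 1) := by
    rw [Finset.sum_eq_single_of_mem N (by simp) fun n hn _ => by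
      rw [hT.upper _ _ (by simp at hn; omega), zero_mul, mul_zero], hT.superdiag, one_mul]
  calc (s - x) * ∑ n ∈ Finset.range (N + 1), a n * b n
      = ∑ m ∈ Finset.range (N + 1), (s * a m) * b m
        - ∑ n ∈ Finset.range (N + 1), a n * (x * b n) := by
        rw [sub_mul, Finset.mul_sum, Finset.mul_sum]
        congr 1 <;> exact Finset.sum_congr rfl fun n _ => by ring
    _ = ∑ m ∈ Finset.range (N + 1), (∑ n ∈ Finset.range (N + 1), a n * T n m
          + a (N + p) * T (N + p) m) * b m
        - ∑ n ∈ Finset.range (N + 1), a n * (∑ m ∈ Finset.range (N + 1), T n m * b m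
          + T n (N + 1) * b (N + 1)) := by
        congr 1 <;> refine Finset.sum_congr rfl fun n hn => ?_
        · rw [← hcol, ha n (by simpa [Nat.lt_succ_iff] using hn)]
        · rw [← Finset.sum_range_succ, hb n (by simpa [Nat.lt_succ_iff] using hn)]
    _ = a (N + p) * T (N + p) N * b N - a N * b (N + 1) := by
        simp only [add_mul, mul_add, Finset.sum_add_distrib, Finset.sum_mul, Finset.mul_sum,
          hlast_col, hlast_row]
        rw [Finset.sum_comm]
        simp only [mul_assoc]
        ring

end Recurrences

theorem Polynomial.eval_eq_zero_of_christoffel_darboux {R : Type*} [CommRing R] [IsDomain R]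
    {u v b₀ b₁ P : R[X]} {x : R} (h₁ : u * b₁ = v * b₀)
    (h₂ : (C x - X) * P = C (v.eval x) * b₀ - C (u.eval x) * b₁)
    (hb₁ : b₁.eval x = 0) (hP : P.eval x ≠ 0) : v.eval x = 0 := by
  by_contra hv
  have hb₀ : b₀.eval x = 0 := by
    have h := congrArg (eval x) h₂
    simp only [eval_mul, eval_sub, eval_C, eval_X, sub_self, zero_mul, hb₁, mul_zero,
      sub_zero] at h
    exact (mul_eq_zero.mp h.symm).resolve_left hv
  have d₁ := congrArg (fun f => (derivative f).eval x) h₁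
  have d₂ := congrArg (fun f => (derivative f).eval x) h₂
  simp only [derivative_mul, derivative_sub, derivative_C, derivative_X, eval_add, eval_mul,
    eval_sub, eval_C, eval_X, eval_neg, eval_one, hb₀, hb₁, sub_self, zero_mul, mul_zero,
    zero_add, add_zero, zero_sub] at d₁ d₂
  exact hP (by linear_combination d₁ - d₂)

section Qp

variable {p : ℕ} (A : Fin p → ℕ → ℝ[X]) (N : ℕ)

theorem Qp_eq_toLinearMap (hp : 0 < p) (n : ℕ) :
    Qp p A n N = Matrix.detRowAlternating.toMultilinearMap.toLinearMap
      (fun i a => A a (N + i)) ⟨0, hp⟩ (fun a => A a n) := by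
  rw [MultilinearMap.toLinearMap_apply, Qp]
  congr 1
  ext i a
  by_cases hi : i = ⟨0, hp⟩
  · subst hi
    simp
  · have : (i : ℕ) ≠ 0 := fun h => hi (Fin.ext h)
    simp [hi, this]

theorem Qp_eq_zero {m : ℕ} (hm : N < m) (hmp : m < N + p) : Qp p A m N = 0 := by
  refine Matrix.det_zero_of_row_eq (i := ⟨0, by omega⟩) (j := ⟨m - N, by omega⟩)
    (by simp [Fin.ext_iff]; omega) ?_
  ext a
  simp [show m - N ≠ 0 by omega, show N + (m - N) = m by omega]

theorem isTypeIRecurrence_Qp (hp : 0 < p) {T : ℕ → ℕ → ℝ[X]}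
    (hA : ∀ a, IsTypeIRecurrence p T X (A a)) :
    IsTypeIRecurrence p T X fun n => Qp p A n N := by
  simpa only [Qp_eq_toLinearMap A N hp] using IsTypeIRecurrence.map_linearMap hA _

end Qp

section RecursionPolynomials

variable {p : ℕ} {T : ℕ → ℕ → ℝ} {B : ℕ → ℝ[X]} {A : Fin p → ℕ → ℝ[X]} {N : ℕ}

theorem Qp_mul_B_succ (hp : 1 ≤ p) (hT : IsBandedHessenberg_s6 p T)
    (hB : IsTypeIIRecurrence p (fun n m => C (T n m)) X B)
    (hA : ∀ a, IsTypeIRecurrence p (fun n m => C (T n m)) X (A a)) :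
    Qp p A N N * B (N + 1) = Qp p A (N + p) N * C (T (N + p) N) * B N := by
  have h := (hT.map C).christoffel_darboux hp
    (fun _ _ => (isTypeIRecurrence_Qp A N hp hA).sum_mul_eq (hT.map C) (by omega))
    (fun _ _ => hB.sum_mul_eq (hT.map C) (by omega)) fun _ hm hmp => Qp_eq_zero A N hm hmp
  rw [sub_self, zero_mul] at h
  exact (sub_eq_zero.mp h.symm).symm

theorem christoffel_darboux_eval_Qp (hp : 1 ≤ p) (hT : IsBandedHessenberg_s6 p T)
    (hB : IsTypeIIRecurrence p (fun n m => C (T n m)) X B)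
    (hA : ∀ a, IsTypeIRecurrence p (fun n m => C (T n m)) X (A a)) (x : ℝ) :
    (C x - X) * ∑ n ∈ Finset.range (N + 1), C ((Qp p A n N).eval x) * B n
      = C ((Qp p A (N + p) N * C (T (N + p) N)).eval x) * B N
        - C ((Qp p A N N).eval x) * B (N + 1) := by
  have hcol (m : ℕ) (_ : m ≤ N) : ∑ n ∈ Finset.range (N + p + 1),
      C ((Qp p A n N).eval x) * C (T n m) = C x * C ((Qp p A m N).eval x) := by
    simpa only [map_sum, map_mul, RingHom.comp_apply, coe_evalRingHom, eval_C, eval_X] using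
      congrArg (C.comp (evalRingHom x))
        ((isTypeIRecurrence_Qp A N hp hA).sum_mul_eq (hT.map C) (m := m) (by omega))
  rw [(hT.map C).christoffel_darboux hp hcol (fun _ _ => hB.sum_mul_eq (hT.map C) (by omega))
    fun _ hm hmp => by simp [Qp_eq_zero A N hm hmp], eval_mul, eval_C, C_mul]

theorem sum_eval_Qp_mul_eval_B_eq_zero (hp : 1 ≤ p) (hT : IsBandedHessenberg_s6 p T)
    (hB : IsTypeIIRecurrence p (fun n m => C (T n m)) X B)
    (hA : ∀ a, IsTypeIRecurrence p (fun n m => C (T n m)) X (A a))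
    {x y : ℝ} (hxy : x ≠ y) (hx : (B (N + 1)).eval x = 0) (hy : (B (N + 1)).eval y = 0)
    (hden : ∑ l ∈ Finset.range (N + 1), (Qp p A l N).eval x * (B l).eval x ≠ 0) :
    ∑ l ∈ Finset.range (N + 1), (Qp p A l N).eval x * (B l).eval y = 0 := by
  have hCD := christoffel_darboux_eval_Qp (N := N) hp hT hB hA x
  have hboundary : (Qp p A (N + p) N * C (T (N + p) N)).eval x = 0 :=
    eval_eq_zero_of_christoffel_darboux (Qp_mul_B_succ hp hT hB hA) hCD hx
      (by simpa [eval_finsetSum] using hden)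
  have h := congrArg (eval y) hCD
  simp only [hboundary, hy, eval_mul, eval_sub, eval_C, eval_X, eval_finsetSum, zero_mul,
    mul_zero, sub_zero] at h
  exact (mul_eq_zero.mp h).resolve_left (sub_ne_zero.mpr hxy)

theorem truncM_mul_calU (hT : IsBandedHessenberg_s6 p T)
    (hB : IsTypeIIRecurrence p (fun n m => C (T n m)) X B)
    {lam : Fin (N + 1) → ℝ} (hroots : ∀ k, (B (N + 1)).eval (lam k) = 0) :
    truncM T N * calU B N lam = calU B N lam * Matrix.diagonal lam := by
  ext n k
  have h := congrArg (eval (lam k)) (hB.sum_mul_eq (hT.map C) (n := n) (K := N + 2) (by omega))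
  simp only [Finset.sum_range_succ _ (N + 1), eval_add, eval_finsetSum, eval_mul, eval_C, eval_X,
    hroots, mul_zero, add_zero] at h
  rw [Matrix.mul_diagonal, Matrix.mul_apply]
  simp only [truncM, calU, Matrix.of_apply]
  rw [Fin.sum_univ_eq_sum_range (fun m => T n m * (B m).eval (lam k)), h, mul_comm]

theorem calW_mul_calU (hp : 1 ≤ p) (hT : IsBandedHessenberg_s6 p T)
    (hB : IsTypeIIRecurrence p (fun n m => C (T n m)) X B)
    (hA : ∀ a, IsTypeIRecurrence p (fun n m => C (T n m)) X (A a))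
    {lam : Fin (N + 1) → ℝ} (hroots : ∀ k, (B (N + 1)).eval (lam k) = 0)
    (hlam : Function.Injective lam)
    (hden : ∀ k, ∑ l ∈ Finset.range (N + 1), (Qp p A l N).eval (lam k) * (B l).eval (lam k) ≠ 0) :
    calW p A B N lam * calU B N lam = 1 := by
  ext k j
  simp only [Matrix.mul_apply, Matrix.one_apply, calW, calU, wfun, Matrix.of_apply,
    div_mul_eq_mul_div]
  rw [← Finset.sum_div, Fin.sum_univ_eq_sum_range
    (fun l => (Qp p A l N).eval (lam k) * (B l).eval (lam j))]
  split_ifs with hkj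
  · subst hkj
    exact div_self (hden k)
  · rw [sum_eval_Qp_mul_eval_B_eq_zero hp hT hB hA (hlam.ne hkj) (hroots k) (hroots j) (hden k),
      zero_div]

end RecursionPolynomials

theorem stmt_6_general
    (p : ℕ) (hp : 1 ≤ p)
    (T : ℕ → ℕ → ℝ)
    (hT1 : ∀ n, T n (n + 1) = 1)
    (hTsup : ∀ n m, n + 1 < m → T n m = 0)
    (hTsub : ∀ n m, m + p < n → T n m = 0)
    (B : ℕ → Polynomial ℝ)
    (hBrec : ∀ n, B (n + 1) = (X - C (T n n)) * B n
      - ∑ j ∈ Finset.Icc 1 p, (if j ≤ n then C (T n (n - j)) * B (n - j) else 0))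
    (A : Fin p → ℕ → Polynomial ℝ)
    (hArec : ∀ a : Fin p, ∀ n : ℕ,
      (if n = 0 then 0 else A a (n - 1))
        + ∑ i ∈ Finset.range (p + 1), C (T (n + i) n) * A a (n + i) = X * A a n)
    (N : ℕ) (lam : Fin (N + 1) → ℝ)
    (hroots : ∀ k, eval (lam k) (B (N + 1)) = 0)
    (hanti : StrictAnti lam)
    (hden : ∀ k : Fin (N + 1), ∑ l ∈ Finset.range (N + 1),
      eval (lam k) (Qp p A l N) * eval (lam k) (B l) ≠ 0) :
    calU B N lam * calW p A B N lam = 1 ∧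
    calW p A B N lam * calU B N lam = 1 ∧
    ∀ n : ℕ, calU B N lam * (Matrix.diagonal lam) ^ n * calW p A B N lam
      = (truncM T N) ^ n := by
  have hT : IsBandedHessenberg_s6 p T := ⟨hT1, hTsup, hTsub⟩
  have hWU := calW_mul_calU hp hT hBrec hArec hroots hanti.injective hden
  have hUW := mul_eq_one_comm.mp hWU
  refine ⟨hUW, hWU, fun n => ?_⟩
  have hconj : SemiconjBy (calU B N lam) (Matrix.diagonal lam) (truncM T N) :=
    (truncM_mul_calU hT hBrec hroots).symm
  rw [(hconj.pow_right n).eq, Matrix.mul_assoc, hUW, Matrix.mul_one]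

theorem stmt_6
    (p : ℕ) (hp : 1 ≤ p)
    (T : ℕ → ℕ → ℝ)
    (hT1 : ∀ n, T n (n + 1) = 1)
    (hTsup : ∀ n m, n + 1 < m → T n m = 0)
    (hTsub : ∀ n m, m + p < n → T n m = 0)
    (hTlow : ∀ n, p ≤ n → T n (n - p) ≠ 0)
    (B : ℕ → Polynomial ℝ)
    (hB0 : B 0 = 1)
    (hBrec : ∀ n, B (n + 1) = (X - C (T n n)) * B n
      - ∑ j ∈ Finset.Icc 1 p, (if j ≤ n then C (T n (n - j)) * B (n - j) else 0))
    (A : Fin p → ℕ → Polynomial ℝ)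
    (hAconst : ∀ a : Fin p, ∀ j < p, ∃ c : ℝ, A a j = C c)
    (hAzero : ∀ a : Fin p, ∀ j : ℕ, j < (a : ℕ) → A a j = 0)
    (hAone : ∀ a : Fin p, A a (a : ℕ) = 1)
    (hArec : ∀ a : Fin p, ∀ n : ℕ,
      (if n = 0 then 0 else A a (n - 1))
        + ∑ i ∈ Finset.range (p + 1), C (T (n + i) n) * A a (n + i) = X * A a n)
    (N : ℕ) (lam : Fin (N + 1) → ℝ)
    (hroots : ∀ k, eval (lam k) (B (N + 1)) = 0)
    (hanti : StrictAnti lam)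
    (hsimple : ∀ k, eval (lam k) (derivative (B (N + 1))) ≠ 0)
    (hden : ∀ k : Fin (N + 1), ∑ l ∈ Finset.range (N + 1),
      eval (lam k) (Qp p A l N) * eval (lam k) (B l) ≠ 0) :
    calU B N lam * calW p A B N lam = 1 ∧
    calW p A B N lam * calU B N lam = 1 ∧
    ∀ n : ℕ, calU B N lam * (Matrix.diagonal lam) ^ n * calW p A B N lam
      = (truncM T N) ^ n :=
  stmt_6_general p hp T hT1 hTsup hTsub B hBrec A hArec N lam hroots hanti hden
end

section
/- (Multiple discrete biorthogonality) Assume B_{N+1} has N+1 simple real zeros λ_1 > ⋯ > λ_{N+1}. Then for all k, l ∈ {0, …, N}: Σ_{j=1}^{N+1} (Σ_{a=1}^{p} A^{(a)}_k(λ_j)·μ_{j,a})·B_l(λ_j) = δ_{k,l}. -/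
open Polynomial

noncomputable def nuMat (p : ℕ) (A : Fin p → ℕ → Polynomial ℝ) : Matrix (Fin p) (Fin p) ℝ :=
  Matrix.of fun j a : Fin p => (A a (j : ℕ)).coeff 0

noncomputable def mu (p : ℕ) (A : Fin p → ℕ → Polynomial ℝ) (B : ℕ → Polynomial ℝ)
    (N : ℕ) (lam : Fin (N + 1) → ℝ) (k : Fin (N + 1)) (a : Fin p) : ℝ :=
  ∑ b : Fin p, (nuMat p A)⁻¹ a b * wfun p A B N lam k (b : ℕ)


/-! The polynomial `Q_{n,N}` is a fixed linear combination of the `A^{(a)}_n` (expand the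
determinant along its first row), so `(Q_{n,N}(y))_n` is a formal left eigenvector of `T` with
eigenvalue `y`, just as `(B_n(x))_n` is a right eigenvector with eigenvalue `x`. Evaluating
`∑_{n,m ≤ N} Q_n(y) T_{n,m} B_m(x)` by rows and by columns, and using `Q_{N+i,N} = 0` for
`0 < i < p`, gives the Christoffel–Darboux identity
`(x - y) ∑_{n ≤ N} Q_n(y) B_n(x) = Q_N(y) B_{N+1}(x) - T_{N+p,N} Q_{N+p}(y) B_N(x)`.
At a zero `λ` of `B_{N+1}` the nondegeneracy `d = ∑ Q_n(λ) B_n(λ) ≠ 0` forces `Q_{N+p}(λ) = 0`, so the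
identity makes the matrices `(Q_n(λ_j) / d_j)_{j,n}` and `(B_n(λ_i))_{n,i}` inverse to each other.
Finally `ν⁻¹ w` recovers the cofactors of the first row, whence
`∑_a A^{(a)}_k(λ_j) μ_{j,a} = Q_{k,N}(λ_j) / d_j`. -/

open Finset
open scoped Matrix

section Hessenberg

variable {R : Type*} [CommRing R]

structure IsBandedHessenberg_s7 (p : ℕ) (T : ℕ → ℕ → R) : Prop where
  apply_succ_self : ∀ n, T n (n + 1) = 1
  apply_of_succ_lt : ∀ n m, n + 1 < m → T n m = 0
  apply_of_add_lt : ∀ n m, m + p < n → T n m = 0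

-- For a banded Hessenberg `T` these finite sums are the full products `T b` and `q T`.
def IsRightEigenseq (T : ℕ → ℕ → R) (x : R) (b : ℕ → R) : Prop :=
  ∀ n, ∑ m ∈ range (n + 2), T n m * b m = x * b n

def IsLeftEigenseq (p : ℕ) (T : ℕ → ℕ → R) (y : R) (q : ℕ → R) : Prop :=
  ∀ m, ∑ n ∈ range (m + p + 1), q n * T n m = y * q m

theorem IsLeftEigenseq.sum_mul {p : ℕ} {T : ℕ → ℕ → R} {y : R} {ι : Type*} [Fintype ι]
    {q : ι → ℕ → R} (hq : ∀ a, IsLeftEigenseq p T y (q a)) (c : ι → R) :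
    IsLeftEigenseq p T y (fun n => ∑ a, q a n * c a) := by
  intro m
  simp only [Finset.sum_mul]
  rw [sum_comm, mul_sum]
  refine sum_congr rfl fun a _ => ?_
  rw [← mul_assoc, ← hq a m, Finset.sum_mul]
  exact sum_congr rfl fun n _ => mul_right_comm _ _ _

theorem sum_Icc_ite_sub_eq_sum_range {M : Type*} [AddCommMonoid M] {f : ℕ → M} {n p : ℕ}
    (hf : ∀ m, m + p < n → f m = 0) :
    ∑ j ∈ Icc 1 p, (if j ≤ n then f (n - j) else 0) = ∑ m ∈ range n, f m := by
  rw [← sum_filter, ← sum_filter_of_ne (p := fun m => n ≤ m + p)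
    fun m _ hm => by_contra fun h => hm (hf m (by omega))]
  refine sum_nbij' (n - ·) (n - ·) ?_ ?_ ?_ ?_ ?_ <;>
    intro j hj <;> simp only [mem_filter, mem_Icc, mem_range] at hj ⊢ <;>
    omega

namespace IsBandedHessenberg_s7

variable {p : ℕ} {T : ℕ → ℕ → R} {x y : R} {b q : ℕ → R}

theorem isRightEigenseq_of_rec (hT : IsBandedHessenberg_s7 p T)
    (hb : ∀ n, b (n + 1) = (x - T n n) * b n
      - ∑ j ∈ Icc 1 p, (if j ≤ n then T n (n - j) * b (n - j) else 0)) :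
    IsRightEigenseq T x b := by
  intro n
  rw [sum_range_succ, sum_range_succ, hT.apply_succ_self, hb n,
    sum_Icc_ite_sub_eq_sum_range (f := fun m => T n m * b m) fun m hm => by rw [hT.apply_of_add_lt n m hm, zero_mul]]
  ring

theorem isLeftEigenseq_of_rec (hT : IsBandedHessenberg_s7 p T)
    (hq : ∀ m, (if m = 0 then 0 else q (m - 1))
      + ∑ i ∈ range (p + 1), T (m + i) m * q (m + i) = y * q m) :
    IsLeftEigenseq p T y q := by
  intro m
  rw [← hq m, add_assoc, sum_range_add]
  congr 1
  · cases m with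
    | zero => simp
    | succ m =>
      rw [sum_range_succ, sum_eq_zero fun n hn => by
        rw [hT.apply_of_succ_lt n (m + 1) (by simpa using hn), mul_zero], hT.apply_succ_self]
      simp
  · exact sum_congr rfl fun i _ => mul_comm _ _

theorem sum_range_mul_right (hT : IsBandedHessenberg_s7 p T) (hb : IsRightEigenseq T x b)
    {n M : ℕ} (hM : n + 2 ≤ M) : ∑ m ∈ range M, T n m * b m = x * b n := by
  rw [← hb n]
  refine (sum_subset (range_subset_range.2 hM) fun m _ hm => ?_).symm
  rw [hT.apply_of_succ_lt n m (by simp at hm; omega), zero_mul]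

theorem sum_range_mul_left (hT : IsBandedHessenberg_s7 p T) (hq : IsLeftEigenseq p T y q)
    {m M : ℕ} (hM : m + p + 1 ≤ M) : ∑ n ∈ range M, q n * T n m = y * q m := by
  rw [← hq m]
  refine (sum_subset (range_subset_range.2 hM) fun n _ hn => ?_).symm
  rw [hT.apply_of_add_lt n m (by simp at hn; omega), mul_zero]

theorem sum_range_succ_mul_right (hT : IsBandedHessenberg_s7 p T) (hb : IsRightEigenseq T x b)
    {n N : ℕ} (hn : n ≤ N) :
    ∑ m ∈ range (N + 1), T n m * b m = x * b n - if n = N then b (N + 1) else 0 := by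
  have h := hT.sum_range_mul_right hb (n := n) (M := N + 2) (by omega)
  rw [sum_range_succ] at h
  split_ifs with hnN
  · subst hnN
    rw [hT.apply_succ_self] at h
    linear_combination h
  · rw [hT.apply_of_succ_lt n (N + 1) (by omega)] at h
    linear_combination h

theorem sum_range_succ_mul_left (hT : IsBandedHessenberg_s7 p T) (hp : 1 ≤ p)
    (hq : IsLeftEigenseq p T y q) {m N : ℕ} (hqN : ∀ i, 0 < i → i < p → q (N + i) = 0)
    (hm : m ≤ N) :
    ∑ n ∈ range (N + 1), q n * T n m
      = y * q m - if m = N then q (N + p) * T (N + p) N else 0 := by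
  have h := hT.sum_range_mul_left hq (m := m) (M := N + 1 + p) (by omega)
  have htail : ∑ i ∈ range p, q (N + 1 + i) * T (N + 1 + i) m = q (N + p) * T (N + p) m := by
    rw [sum_eq_single (p - 1) (fun i hi hne => by
        rw [show N + 1 + i = N + (i + 1) by ring, hqN (i + 1) (by omega) (by simp at hi; omega),
          zero_mul]) (fun h => absurd (mem_range.2 (by omega)) h),
      show N + 1 + (p - 1) = N + p by omega]
  rw [sum_range_add, htail] at h
  split_ifs with hmN
  · subst hmN
    linear_combination h
  · rw [hT.apply_of_add_lt (N + p) m (by omega)] at h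
    linear_combination h

theorem christoffel_darboux (hT : IsBandedHessenberg_s7 p T) (hp : 1 ≤ p)
    (hb : IsRightEigenseq T x b) (hq : IsLeftEigenseq p T y q)
    {N : ℕ} (hqN : ∀ i, 0 < i → i < p → q (N + i) = 0) :
    (x - y) * ∑ n ∈ range (N + 1), q n * b n
      = q N * b (N + 1) - T (N + p) N * q (N + p) * b N := by
  have hrow : ∑ n ∈ range (N + 1), q n * ∑ m ∈ range (N + 1), T n m * b m
      = x * ∑ n ∈ range (N + 1), q n * b n - q N * b (N + 1) := by
    rw [sum_congr rfl fun n hn =>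
      by rw [hT.sum_range_succ_mul_right hb (mem_range_succ_iff.1 hn)]]
    simp only [mul_sub, mul_ite, mul_zero, sum_sub_distrib, sum_ite_eq', mem_range, mul_sum]
    simp [mul_left_comm]
  have hcol : ∑ m ∈ range (N + 1), (∑ n ∈ range (N + 1), q n * T n m) * b m
      = y * ∑ n ∈ range (N + 1), q n * b n - T (N + p) N * q (N + p) * b N := by
    rw [sum_congr rfl fun m hm =>
      by rw [hT.sum_range_succ_mul_left hp hq hqN (mem_range_succ_iff.1 hm)]]
    simp only [sub_mul, ite_mul, zero_mul, sum_sub_distrib, sum_ite_eq', mem_range, mul_sum]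
    simp [mul_comm, mul_left_comm]
  have hswap : ∑ n ∈ range (N + 1), q n * ∑ m ∈ range (N + 1), T n m * b m
      = ∑ m ∈ range (N + 1), (∑ n ∈ range (N + 1), q n * T n m) * b m := by
    simp only [mul_sum, sum_mul, mul_assoc]
    exact sum_comm
  linear_combination hcol - hrow + hswap

end IsBandedHessenberg_s7

end Hessenberg

theorem isRightEigenseq_eval {R : Type*} [CommRing R] {p : ℕ} {T : ℕ → ℕ → R}
    (hT : IsBandedHessenberg_s7 p T) {B : ℕ → R[X]}
    (hB : ∀ n, B (n + 1) = (X - C (T n n)) * B n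
      - ∑ j ∈ Icc 1 p, (if j ≤ n then C (T n (n - j)) * B (n - j) else 0)) (x : R) :
    IsRightEigenseq T x (fun n => eval x (B n)) :=
  hT.isRightEigenseq_of_rec fun n => by
    simpa [apply_ite (eval x), eval_finsetSum] using congrArg (eval x) (hB n)

theorem isLeftEigenseq_eval {R : Type*} [CommRing R] {p : ℕ} {T : ℕ → ℕ → R}
    (hT : IsBandedHessenberg_s7 p T) {A : ℕ → R[X]}
    (hA : ∀ n, (if n = 0 then 0 else A (n - 1))
      + ∑ i ∈ range (p + 1), C (T (n + i) n) * A (n + i) = X * A n) (y : R) :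
    IsLeftEigenseq p T y (fun n => eval y (A n)) :=
  hT.isLeftEigenseq_of_rec fun n => by
    simpa [apply_ite (eval y), eval_finsetSum] using congrArg (eval y) (hA n)

theorem Matrix.det_updateRow_eq_sum_mul_adjugate {n R : Type*} [Fintype n] [DecidableEq n]
    [CommRing R] (M : Matrix n n R) (i : n) (v : n → R) :
    (M.updateRow i v).det = ∑ j, v j * M.adjugate j i := by
  rw [det_eq_sum_mul_adjugate_row _ i]
  simp only [Matrix.updateRow_self, Matrix.adjugate_apply, Matrix.updateRow_idem]

section TypeI

variable {p : ℕ}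

theorem Qp_eq_sum_mul_adjugate (hp : 0 < p) (A : Fin p → ℕ → ℝ[X]) (n N : ℕ) :
    Qp p A n N = ∑ a, A a n * (Matrix.of fun i a : Fin p => A a (N + i)).adjugate a ⟨0, hp⟩ := by
  rw [Qp, ← Matrix.det_updateRow_eq_sum_mul_adjugate]
  congr 1
  ext i a
  by_cases hi : i = ⟨0, hp⟩
  · subst hi
    simp
  · rw [Matrix.updateRow_ne hi]
    simp [Fin.ext_iff] at hi
    simp [hi]

theorem Qp_add_eq_zero (A : Fin p → ℕ → ℝ[X]) (N : ℕ) {i : ℕ} (hi : 0 < i) (hip : i < p) :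
    Qp p A (N + i) N = 0 :=
  Matrix.det_zero_of_row_eq (i := ⟨0, by omega⟩) (j := ⟨i, hip⟩) (by simp [Fin.ext_iff]; omega)
    (by ext a; simp [hi.ne'])

variable {A : Fin p → ℕ → ℝ[X]}

theorem isLeftEigenseq_eval_Qp {T : ℕ → ℕ → ℝ} (hT : IsBandedHessenberg_s7 p T) (hp : 0 < p)
    (hA : ∀ a : Fin p, ∀ n : ℕ, (if n = 0 then 0 else A a (n - 1))
      + ∑ i ∈ range (p + 1), C (T (n + i) n) * A a (n + i) = X * A a n) (N : ℕ) (y : ℝ) :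
    IsLeftEigenseq p T y (fun n => eval y (Qp p A n N)) := by
  simp_rw [Qp_eq_sum_mul_adjugate hp, eval_finsetSum, eval_mul]
  exact IsLeftEigenseq.sum_mul (fun a => isLeftEigenseq_eval hT (hA a) y) _

theorem eval_eq_nuMat (hA : ∀ a : Fin p, ∀ j < p, ∃ c : ℝ, A a j = C c) (y : ℝ) (j a : Fin p) :
    eval y (A a j) = nuMat p A j a := by
  obtain ⟨c, hc⟩ := hA a j j.isLt
  simp [nuMat, hc]

theorem det_nuMat (hA0 : ∀ a : Fin p, ∀ j : ℕ, j < a → A a j = 0) (hA1 : ∀ a : Fin p, A a a = 1) :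
    (nuMat p A).det = 1 := by
  rw [Matrix.det_of_isLowerTriangular _ fun i j hij => by simp [nuMat, hA0 j i hij]]
  exact prod_eq_one fun i _ => by simp [nuMat, hA1 i]

variable {B : ℕ → ℝ[X]} {N : ℕ} {lam : Fin (N + 1) → ℝ}

theorem mu_eq_eval_div {c : Fin p → ℝ[X]} (hc : ∀ n, Qp p A n N = ∑ a, A a n * c a)
    (hAconst : ∀ a : Fin p, ∀ j < p, ∃ c : ℝ, A a j = C c)
    (hA0 : ∀ a : Fin p, ∀ j : ℕ, j < a → A a j = 0) (hA1 : ∀ a : Fin p, A a a = 1)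
    (j : Fin (N + 1)) (a : Fin p) :
    mu p A B N lam j a = eval (lam j) (c a) /
      ∑ l ∈ range (N + 1), eval (lam j) (Qp p A l N) * eval (lam j) (B l) := by
  have hw : (fun b : Fin p => wfun p A B N lam j b) = nuMat p A *ᵥ fun a => eval (lam j) (c a) /
      ∑ l ∈ range (N + 1), eval (lam j) (Qp p A l N) * eval (lam j) (B l) := by
    ext b
    simp only [wfun, hc, eval_finsetSum, eval_mul, Matrix.mulVec, dotProduct, sum_div,
      mul_div_assoc, eval_eq_nuMat hAconst]
  change ((nuMat p A)⁻¹ *ᵥ fun b : Fin p => wfun p A B N lam j b) a = _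
  rw [hw, Matrix.mulVec_mulVec, Matrix.nonsing_inv_mul _ (by simp [det_nuMat hA0 hA1]),
    Matrix.one_mulVec]

theorem sum_eval_mul_mu (hp : 0 < p) (hAconst : ∀ a : Fin p, ∀ j < p, ∃ c : ℝ, A a j = C c)
    (hA0 : ∀ a : Fin p, ∀ j : ℕ, j < a → A a j = 0) (hA1 : ∀ a : Fin p, A a a = 1)
    (j : Fin (N + 1)) (k : ℕ) :
    ∑ a, eval (lam j) (A a k) * mu p A B N lam j a = eval (lam j) (Qp p A k N) /
      ∑ l ∈ range (N + 1), eval (lam j) (Qp p A l N) * eval (lam j) (B l) := by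
  simp_rw [mu_eq_eval_div (Qp_eq_sum_mul_adjugate hp A · N) hAconst hA0 hA1,
    Qp_eq_sum_mul_adjugate hp A k N, eval_finsetSum, eval_mul, sum_div, mul_div_assoc]

end TypeI

theorem eval_eq_zero_of_christoffel_darboux {K : Type*} [Field K] [Infinite K]
    {Q B : ℕ → K[X]} {N M : ℕ} {t : K}
    (hCD : ∀ x y : K, (x - y) * ∑ n ∈ range (N + 1), eval y (Q n) * eval x (B n)
      = eval y (Q N) * eval x (B (N + 1)) - t * eval y (Q M) * eval x (B N))
    {x : K} (hx : eval x (B (N + 1)) = 0) (ht : t ≠ 0)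
    (hdiag : ∑ n ∈ range (N + 1), eval x (Q n) * eval x (B n) ≠ 0) : eval x (Q M) = 0 := by
  have hBN : eval x (B N) ≠ 0 := by
    -- otherwise the identity at `x` kills the polynomial `(X - x) * ∑ Q n * B n(x)`
    intro hBN
    have hS : (X - C x) * ∑ n ∈ range (N + 1), Q n * C (eval x (B n)) = 0 :=
      Polynomial.funext fun y => by
        simp only [eval_mul, eval_sub, eval_X, eval_C, eval_finsetSum, eval_zero]
        linear_combination -hCD x y - eval y (Q N) * hx + t * eval y (Q M) * hBN
    apply hdiag
    simpa [eval_finsetSum] using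
      congrArg (eval x) ((mul_eq_zero.1 hS).resolve_left (X_sub_C_ne_zero x))
  have h := hCD x x
  rw [sub_self, zero_mul, hx, mul_zero, zero_sub, eq_comm, neg_eq_zero] at h
  exact (mul_eq_zero.1 ((mul_eq_zero.1 h).resolve_right hBN)).resolve_left ht

theorem Matrix.sum_div_mul_eq_of_mul_eq_diagonal {ι K : Type*} [Fintype ι] [DecidableEq ι]
    [Field K] {f g : Matrix ι ι K} {d : ι → K} (hfg : f * g = Matrix.diagonal d)
    (hd : ∀ i, d i ≠ 0) (k l : ι) :
    ∑ j, f j k / d j * g l j = if l = k then 1 else 0 := by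
  have h : Matrix.diagonal (fun i => (d i)⁻¹) * f * g = 1 := by
    rw [Matrix.mul_assoc, hfg, Matrix.diagonal_mul_diagonal]
    simp [hd]
  have := congrArg (fun M : Matrix ι ι K => M l k) (mul_eq_one_comm.1 h)
  rw [Matrix.mul_apply, Matrix.one_apply] at this
  simp only [Matrix.diagonal_mul] at this
  rw [← this]
  exact sum_congr rfl fun j _ => by ring

theorem stmt_7_general
    (p : ℕ) (hp : 1 ≤ p)
    (T : ℕ → ℕ → ℝ)
    (hT1 : ∀ n, T n (n + 1) = 1)
    (hTsup : ∀ n m, n + 1 < m → T n m = 0)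
    (hTsub : ∀ n m, m + p < n → T n m = 0)
    (hTlow : ∀ n, p ≤ n → T n (n - p) ≠ 0)
    (B : ℕ → Polynomial ℝ)
    (hBrec : ∀ n, B (n + 1) = (X - C (T n n)) * B n
      - ∑ j ∈ Finset.Icc 1 p, (if j ≤ n then C (T n (n - j)) * B (n - j) else 0))
    (A : Fin p → ℕ → Polynomial ℝ)
    (hAconst : ∀ a : Fin p, ∀ j < p, ∃ c : ℝ, A a j = C c)
    (hAzero : ∀ a : Fin p, ∀ j : ℕ, j < (a : ℕ) → A a j = 0)
    (hAone : ∀ a : Fin p, A a (a : ℕ) = 1)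
    (hArec : ∀ a : Fin p, ∀ n : ℕ,
      (if n = 0 then 0 else A a (n - 1))
        + ∑ i ∈ Finset.range (p + 1), C (T (n + i) n) * A a (n + i) = X * A a n)
    (N : ℕ) (lam : Fin (N + 1) → ℝ)
    (hroots : ∀ k, eval (lam k) (B (N + 1)) = 0)
    (hanti : StrictAnti lam)
    (hden : ∀ k : Fin (N + 1), ∑ l ∈ Finset.range (N + 1),
      eval (lam k) (Qp p A l N) * eval (lam k) (B l) ≠ 0) :
    ∀ k l : ℕ, k ≤ N → l ≤ N →
      ∑ j : Fin (N + 1),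
          (∑ a : Fin p, eval (lam j) (A a k) * mu p A B N lam j a) * eval (lam j) (B l)
        = if k = l then (1 : ℝ) else 0 := by
  have hT : IsBandedHessenberg_s7 p T := ⟨hT1, hTsup, hTsub⟩
  have hCD : ∀ x y : ℝ, (x - y) * ∑ n ∈ range (N + 1), eval y (Qp p A n N) * eval x (B n)
      = eval y (Qp p A N N) * eval x (B (N + 1))
        - T (N + p) N * eval y (Qp p A (N + p) N) * eval x (B N) := fun x y =>
    hT.christoffel_darboux hp (isRightEigenseq_eval hT hBrec x)
      (isLeftEigenseq_eval_Qp hT hp hArec N y)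
      fun i hi hip => by rw [Qp_add_eq_zero A N hi hip, eval_zero]
  have hnode : ∀ j, eval (lam j) (Qp p A (N + p) N) = 0 := fun j =>
    eval_eq_zero_of_christoffel_darboux hCD (hroots j)
      (by simpa using hTlow (N + p) (by omega)) (hden j)
  have horth : ∀ i j, i ≠ j →
      ∑ n ∈ range (N + 1), eval (lam j) (Qp p A n N) * eval (lam i) (B n) = 0 := by
    intro i j hij
    have h := hCD (lam i) (lam j)
    rw [hroots i, hnode j, mul_zero, mul_zero, zero_mul, sub_zero] at h
    exact (mul_eq_zero.1 h).resolve_left (sub_ne_zero.2 (hanti.injective.ne hij))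
  intro k l hk hl
  simp_rw [sum_eval_mul_mu hp hAconst hAzero hAone]
  have := Matrix.sum_div_mul_eq_of_mul_eq_diagonal
    (f := Matrix.of fun j (n : Fin (N + 1)) => eval (lam j) (Qp p A n N))
    (g := Matrix.of fun (n : Fin (N + 1)) i => eval (lam i) (B n)) ?_ hden ⟨k, by omega⟩ ⟨l, by omega⟩
  · simpa [Fin.ext_iff, eq_comm] using this
  ext j i
  rw [Matrix.mul_apply, Matrix.diagonal_apply]
  simp only [Matrix.of_apply]
  rw [Fin.sum_univ_eq_sum_range (fun n => eval (lam j) (Qp p A n N) * eval (lam i) (B n))]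
  split_ifs with hji
  · rw [hji]
  · exact horth i j (Ne.symm hji)

theorem stmt_7
    (p : ℕ) (hp : 1 ≤ p)
    (T : ℕ → ℕ → ℝ)
    (hT1 : ∀ n, T n (n + 1) = 1)
    (hTsup : ∀ n m, n + 1 < m → T n m = 0)
    (hTsub : ∀ n m, m + p < n → T n m = 0)
    (hTlow : ∀ n, p ≤ n → T n (n - p) ≠ 0)
    (B : ℕ → Polynomial ℝ)
    (hB0 : B 0 = 1)
    (hBrec : ∀ n, B (n + 1) = (X - C (T n n)) * B n
      - ∑ j ∈ Finset.Icc 1 p, (if j ≤ n then C (T n (n - j)) * B (n - j) else 0))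
    (A : Fin p → ℕ → Polynomial ℝ)
    (hAconst : ∀ a : Fin p, ∀ j < p, ∃ c : ℝ, A a j = C c)
    (hAzero : ∀ a : Fin p, ∀ j : ℕ, j < (a : ℕ) → A a j = 0)
    (hAone : ∀ a : Fin p, A a (a : ℕ) = 1)
    (hArec : ∀ a : Fin p, ∀ n : ℕ,
      (if n = 0 then 0 else A a (n - 1))
        + ∑ i ∈ Finset.range (p + 1), C (T (n + i) n) * A a (n + i) = X * A a n)
    (N : ℕ) (lam : Fin (N + 1) → ℝ)
    (hroots : ∀ k, eval (lam k) (B (N + 1)) = 0)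
    (hanti : StrictAnti lam)
    (hsimple : ∀ k, eval (lam k) (derivative (B (N + 1))) ≠ 0)
    (hden : ∀ k : Fin (N + 1), ∑ l ∈ Finset.range (N + 1),
      eval (lam k) (Qp p A l N) * eval (lam k) (B l) ≠ 0) :
    ∀ k l : ℕ, k ≤ N → l ≤ N →
      ∑ j : Fin (N + 1),
          (∑ a : Fin p, eval (lam j) (A a k) * mu p A B N lam j a) * eval (lam j) (B l)
        = if k = l then (1 : ℝ) else 0 :=
  stmt_7_general p hp T hT1 hTsup hTsub hTlow B hBrec A hAconst hAzero hAone hArec N lam hroots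
    hanti hden
end

section
/- If an (N+1)×(N+1) real matrix M admits a positive bidiagonal factorization M = L_1^{[N]} L_2^{[N]} ⋯ L_p^{[N]} U^{[N]} (with all parameters α_i > 0), then M is oscillatory. -/
open Polynomial

noncomputable def Lmat (p sz k : ℕ) (α : ℕ → ℝ) : Matrix (Fin sz) (Fin sz) ℝ :=
  Matrix.of fun i j : Fin sz => if (i : ℕ) = (j : ℕ) then 1
    else if (i : ℕ) = (j : ℕ) + 1 then α (k + 1 + (j : ℕ) * (p + 1)) else 0

noncomputable def Umat (p sz : ℕ) (α : ℕ → ℝ) : Matrix (Fin sz) (Fin sz) ℝ :=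
  Matrix.of fun i j : Fin sz => if (j : ℕ) = (i : ℕ) + 1 then 1
    else if (i : ℕ) = (j : ℕ) then α (1 + (i : ℕ) * (p + 1)) else 0

def TotallyNonneg {n : ℕ} (M : Matrix (Fin n) (Fin n) ℝ) : Prop :=
  ∀ (k : ℕ) (r c : Fin k → Fin n), StrictMono r → StrictMono c →
    0 ≤ (M.submatrix r c).det

def TotallyPos {n : ℕ} (M : Matrix (Fin n) (Fin n) ℝ) : Prop :=
  ∀ (k : ℕ) (r c : Fin k → Fin n), StrictMono r → StrictMono c →
    0 < (M.submatrix r c).det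

def Oscillatory {n : ℕ} (M : Matrix (Fin n) (Fin n) ℝ) : Prop :=
  TotallyNonneg M ∧ M.det ≠ 0 ∧ ∃ m : ℕ, 0 < m ∧ TotallyPos (M ^ m)
/-!
Each factor `Lₖ`, `U` is entrywise nonnegative with a *staircase* support (increasing rows
meet weakly increasing columns), so in the multilinear expansion of a minor of `G * B` over
row selections of `B` every term is nonnegative when `B` is totally nonnegative; this gives
total nonnegativity of all powers of `M`, and a minor of `G * B` is positive as soon as one
term is. Positive diagonals let a minor pass through a factor unchanged, while the positive
subdiagonal of `L₁` and superdiagonal of `U` let a row selection `r` move by one step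
towards a column selection `c` through each copy of `M`. After `n - 1` copies `r` reaches
`c`, so `M ^ t` is totally positive for `t ≥ n - 1`.
-/

open Matrix

section Staircase

variable {n k : ℕ}

def IsNonnegStaircase (A : Matrix (Fin n) (Fin n) ℝ) : Prop :=
  (∀ i j, 0 ≤ A i j) ∧ ∀ ⦃i i' j j'⦄, i < i' → A i j ≠ 0 → A i' j' ≠ 0 → j ≤ j'

theorem det_submatrix_mul_eq_sum (A B : Matrix (Fin n) (Fin n) ℝ) (r c : Fin k → Fin n) :
    ((A * B).submatrix r c).det
      = ∑ f : Fin k → Fin n, (∏ i, A (r i) (f i)) * (B.submatrix f c).det := by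
  have hrows : (A * B).submatrix r c = fun i => ∑ x, A (r i) x • fun j => B x (c j) := by
    funext i j
    simp [Matrix.mul_apply, Finset.sum_apply]
  change detRowAlternating.toMultilinearMap ((A * B).submatrix r c) = _
  rw [hrows, MultilinearMap.map_sum]
  refine Finset.sum_congr rfl fun f _ => ?_
  rw [MultilinearMap.map_smul_univ]
  rfl

theorem totallyNonneg_one : TotallyNonneg (1 : Matrix (Fin n) (Fin n) ℝ) := by
  intro k r c hr hc
  by_cases hrc : ∀ i, r i ∈ Set.range c
  · have hrange : Set.range r = Set.range c :=
      Set.eq_of_subset_of_ncard_le (Set.range_subset_iff.2 hrc)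
        (by rw [Set.ncard_range_of_injective hr.injective,
          Set.ncard_range_of_injective hc.injective]) (Set.toFinite _)
    obtain rfl := (hr.range_inj hc).1 hrange
    simp [submatrix_one _ hr.injective]
  · push Not at hrc
    obtain ⟨i, hi⟩ := hrc
    refine (det_eq_zero_of_row_eq_zero i fun j => ?_).ge
    simpa [one_apply] using fun h => hi ⟨j, h.symm⟩

theorem TotallyPos.det_pos {A : Matrix (Fin n) (Fin n) ℝ} (hA : TotallyPos A) : 0 < A.det := by
  simpa using hA n id id strictMono_id strictMono_id

namespace IsNonnegStaircase

variable {A B : Matrix (Fin n) (Fin n) ℝ} {r c f : Fin k → Fin n}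

/-- A term with all `A (r i) (f i) ≠ 0` has `f` monotone, so either `f` is strictly monotone
or `B.submatrix f c` has two equal rows. -/
theorem prod_mul_det_submatrix_nonneg (hA : IsNonnegStaircase A) (hB : TotallyNonneg B)
    (hr : StrictMono r) (hc : StrictMono c) (f : Fin k → Fin n) :
    0 ≤ (∏ i, A (r i) (f i)) * (B.submatrix f c).det := by
  by_cases hz : ∃ i, A (r i) (f i) = 0
  · obtain ⟨i, hi⟩ := hz
    rw [Finset.prod_eq_zero (Finset.mem_univ i) hi, zero_mul]
  push Not at hz
  by_cases hf : Function.Injective f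
  · have hmono : Monotone f := fun i j hij =>
      hij.eq_or_lt.elim (fun h => h ▸ le_rfl) fun h => hA.2 (hr h) (hz i) (hz j)
    exact mul_nonneg (Finset.prod_nonneg fun i _ => hA.1 _ _)
      (hB k f c (hmono.strictMono_of_injective hf) hc)
  · obtain ⟨a, b, hab, hne⟩ := Function.not_injective_iff.1 hf
    rw [det_zero_of_row_eq hne (funext fun j => by simp [hab]), mul_zero]

theorem totallyNonneg_mul (hA : IsNonnegStaircase A) (hB : TotallyNonneg B) :
    TotallyNonneg (A * B) := fun _ _ _ hr hc => by
  rw [det_submatrix_mul_eq_sum]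
  exact Finset.sum_nonneg fun f _ => hA.prod_mul_det_submatrix_nonneg hB hr hc f

theorem det_submatrix_mul_pos (hA : IsNonnegStaircase A) (hB : TotallyNonneg B)
    (hr : StrictMono r) (hc : StrictMono c)
    (hpos : ∀ i, 0 < A (r i) (f i)) (hdet : 0 < (B.submatrix f c).det) :
    0 < ((A * B).submatrix r c).det := by
  rw [det_submatrix_mul_eq_sum]
  exact Finset.sum_pos' (fun g _ => hA.prod_mul_det_submatrix_nonneg hB hr hc g)
    ⟨f, Finset.mem_univ f, mul_pos (Finset.prod_pos fun i _ => hpos i) hdet⟩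

end IsNonnegStaircase

variable {Gs : List (Matrix (Fin n) (Fin n) ℝ)} {B : Matrix (Fin n) (Fin n) ℝ}

theorem totallyNonneg_list_prod_mul (hGs : ∀ G ∈ Gs, IsNonnegStaircase G)
    (hB : TotallyNonneg B) : TotallyNonneg (Gs.prod * B) := by
  induction Gs with
  | nil => simpa using hB
  | cons G Gs ih =>
    rw [List.prod_cons, mul_assoc]
    exact (hGs G List.mem_cons_self).totallyNonneg_mul
      (ih fun G' hG' => hGs G' (List.mem_cons_of_mem _ hG'))

theorem det_submatrix_list_prod_mul_pos (hGs : ∀ G ∈ Gs, IsNonnegStaircase G)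
    (hdiag : ∀ G ∈ Gs, ∀ i, 0 < G i i) (hB : TotallyNonneg B) {r c : Fin k → Fin n}
    (hr : StrictMono r) (hc : StrictMono c) (hdet : 0 < (B.submatrix r c).det) :
    0 < ((Gs.prod * B).submatrix r c).det := by
  induction Gs with
  | nil => simpa using hdet
  | cons G Gs ih =>
    have hGs' : ∀ G' ∈ Gs, IsNonnegStaircase G' := fun G' h => hGs G' (List.mem_cons_of_mem _ h)
    rw [List.prod_cons, mul_assoc]
    exact (hGs G List.mem_cons_self).det_submatrix_mul_pos
      (totallyNonneg_list_prod_mul hGs' hB) hr hc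
      (fun i => hdiag G List.mem_cons_self (r i))
      (ih hGs' fun G' h => hdiag G' (List.mem_cons_of_mem _ h))

end Staircase

section Bidiagonal

variable {p n : ℕ} {α : ℕ → ℝ}

theorem isNonnegStaircase_Lmat (hα : ∀ i, 1 ≤ i → 0 < α i) (k : ℕ) :
    IsNonnegStaircase (Lmat p n k α) := by
  refine ⟨fun i j => ?_, fun i i' j j' hi h h' => ?_⟩
  · simp only [Lmat, of_apply]
    split_ifs
    exacts [zero_le_one, (hα _ (by omega)).le, le_rfl]
  · simp only [Lmat, of_apply] at h h'
    rw [Fin.lt_def] at hi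
    rw [Fin.le_def]
    split_ifs at h h' <;> first | omega | exact absurd rfl ‹_›

theorem isNonnegStaircase_Umat (hα : ∀ i, 1 ≤ i → 0 < α i) : IsNonnegStaircase (Umat p n α) := by
  refine ⟨fun i j => ?_, fun i i' j j' hi h h' => ?_⟩
  · simp only [Umat, of_apply]
    split_ifs
    exacts [zero_le_one, (hα _ (by omega)).le, le_rfl]
  · simp only [Umat, of_apply] at h h'
    rw [Fin.lt_def] at hi
    rw [Fin.le_def]
    split_ifs at h h' <;> first | omega | exact absurd rfl ‹_›

theorem Lmat_pos (hα : ∀ i, 1 ≤ i → 0 < α i) (k : ℕ) {i j : Fin n}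
    (hji : j ≤ i) (hij : (i : ℕ) ≤ j + 1) : 0 < Lmat p n k α i j := by
  simp only [Lmat, of_apply]
  split_ifs
  exacts [one_pos, hα _ (by omega), by rw [Fin.le_def] at hji; omega]

theorem Umat_pos (hα : ∀ i, 1 ≤ i → 0 < α i) {i j : Fin n}
    (hij : i ≤ j) (hji : (j : ℕ) ≤ i + 1) : 0 < Umat p n α i j := by
  simp only [Umat, of_apply]
  split_ifs
  exacts [one_pos, hα _ (by omega), by rw [Fin.le_def] at hij; omega]

end Bidiagonal

section Product

noncomputable def bidiagProd (p n : ℕ) (α : ℕ → ℝ) : Matrix (Fin n) (Fin n) ℝ :=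
  ((List.range p).map fun k => Lmat p n (k + 1) α).prod * Umat p n α

variable {p n : ℕ} {α : ℕ → ℝ}

theorem totallyNonneg_bidiagProd_mul (hα : ∀ i, 1 ≤ i → 0 < α i)
    {B : Matrix (Fin n) (Fin n) ℝ} (hB : TotallyNonneg B) :
    TotallyNonneg (bidiagProd p n α * B) := by
  rw [bidiagProd, mul_assoc]
  refine totallyNonneg_list_prod_mul ?_ ((isNonnegStaircase_Umat hα).totallyNonneg_mul hB)
  simp only [List.mem_map, List.mem_range]
  rintro _ ⟨k, -, rfl⟩
  exact isNonnegStaircase_Lmat hα _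

theorem totallyNonneg_bidiagProd_pow (hα : ∀ i, 1 ≤ i → 0 < α i) (t : ℕ) :
    TotallyNonneg (bidiagProd p n α ^ t) := by
  induction t with
  | zero => exact totallyNonneg_one
  | succ t ih => exact pow_succ' (bidiagProd p n α) t ▸ totallyNonneg_bidiagProd_mul hα ih

/-- Row `r i` is lowered to `min (r i) (w i)` by `L₁`, kept by `L₂, …, Lₚ`, and raised to
`w i` by `U`. -/
theorem det_submatrix_bidiagProd_mul_pos (hp : 1 ≤ p) (hα : ∀ i, 1 ≤ i → 0 < α i)
    {B : Matrix (Fin n) (Fin n) ℝ} (hB : TotallyNonneg B) {k : ℕ} {r w c : Fin k → Fin n}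
    (hr : StrictMono r) (hw : StrictMono w) (hc : StrictMono c)
    (hrw : ∀ i, (r i : ℕ) ≤ w i + 1 ∧ (w i : ℕ) ≤ r i + 1)
    (hdet : 0 < (B.submatrix w c).det) :
    0 < ((bidiagProd p n α * B).submatrix r c).det := by
  obtain ⟨q, rfl⟩ : ∃ q, p = q + 1 := ⟨p - 1, by omega⟩
  set Ls := (List.range q).map fun k => Lmat (q + 1) n (k + 2) α
  have hsplit : bidiagProd (q + 1) n α * B
      = Lmat (q + 1) n 1 α * (Ls.prod * (Umat (q + 1) n α * B)) := by
    simp only [bidiagProd, List.range_succ_eq_map, List.map_cons, List.prod_cons, List.map_map,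
      Ls, mul_assoc]
    rfl
  have hLs : ∀ G ∈ Ls, IsNonnegStaircase G ∧ ∀ i, 0 < G i i := by
    simp only [Ls, List.mem_map, List.mem_range]
    rintro _ ⟨k, -, rfl⟩
    exact ⟨isNonnegStaircase_Lmat hα _, fun i => Lmat_pos hα _ le_rfl (by omega)⟩
  let m : Fin k → Fin n := fun i => min (r i) (w i)
  have hm : StrictMono m := fun i j hij => min_lt_min (hr hij) (hw hij)
  have hrm : ∀ i, (r i : ℕ) ≤ m i + 1 := fun i => by
    have := hrw i; simp only [m, Fin.coe_min]; omega
  have hwm : ∀ i, (w i : ℕ) ≤ m i + 1 := fun i => by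
    have := hrw i; simp only [m, Fin.coe_min]; omega
  have hUB := (isNonnegStaircase_Umat (p := q + 1) hα).totallyNonneg_mul hB
  have hLsUB := totallyNonneg_list_prod_mul (fun G hG => (hLs G hG).1) hUB
  have hmU : 0 < ((Umat (q + 1) n α * B).submatrix m c).det :=
    (isNonnegStaircase_Umat hα).det_submatrix_mul_pos hB hm hc
      (fun i => Umat_pos hα (min_le_right _ _) (hwm i)) hdet
  have hmLsU : 0 < ((Ls.prod * (Umat (q + 1) n α * B)).submatrix m c).det :=
    det_submatrix_list_prod_mul_pos (fun G hG => (hLs G hG).1) (fun G hG => (hLs G hG).2)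
      hUB hm hc hmU
  rw [hsplit]
  exact (isNonnegStaircase_Lmat hα 1).det_submatrix_mul_pos hLsUB hr hc
    (fun i => Lmat_pos hα 1 (min_le_left _ _) (hrm i)) hmLsU

/-- Each copy of `M` moves every row index one step towards its target column index; the
clamped sequence `w` stays strictly increasing because `r` and `c` both are. -/
theorem det_submatrix_bidiagProd_pow_pos (hp : 1 ≤ p) (hα : ∀ i, 1 ≤ i → 0 < α i) (t : ℕ)
    {k : ℕ} {r c : Fin k → Fin n} (hr : StrictMono r) (hc : StrictMono c)
    (hrc : ∀ i, (r i : ℕ) ≤ c i + t ∧ (c i : ℕ) ≤ r i + t) :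
    0 < ((bidiagProd p n α ^ t).submatrix r c).det := by
  induction t generalizing r with
  | zero =>
    obtain rfl : r = c := funext fun i => Fin.ext (by have := hrc i; omega)
    simp [submatrix_one _ hr.injective]
  | succ t ih =>
    let w : Fin k → Fin n := fun i =>
      ⟨max ((r i : ℕ) - 1) (min ((r i : ℕ) + 1) (c i)), by have := (r i).isLt; omega⟩
    have hw : StrictMono w := fun i j hij => by
      have := hr hij
      have := hc hij
      simp only [w, Fin.lt_def] at *
      omega
    rw [pow_succ']
    refine det_submatrix_bidiagProd_mul_pos hp hα (totallyNonneg_bidiagProd_pow hα t) hr hw hc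
      (fun i => by simp only [w]; omega) (ih hw fun i => ?_)
    have := hrc i
    simp only [w]
    omega

theorem totallyPos_bidiagProd_pow (hp : 1 ≤ p) (hα : ∀ i, 1 ≤ i → 0 < α i) {t : ℕ}
    (ht : n ≤ t + 1) : TotallyPos (bidiagProd p n α ^ t) :=
  fun _ r c hr hc => det_submatrix_bidiagProd_pow_pos hp hα t hr hc fun i => by
    have := (r i).isLt
    have := (c i).isLt
    omega

end Product

theorem stmt_10
    (p N : ℕ) (hp : 1 ≤ p)
    (α : ℕ → ℝ) (hα : ∀ i, 1 ≤ i → 0 < α i)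
    (M : Matrix (Fin (N + 1)) (Fin (N + 1)) ℝ)
    (hfact : M = (((List.range p).map fun k => Lmat p (N + 1) (k + 1) α).prod)
      * Umat p (N + 1) α) :
    Oscillatory M := by
  change M = bidiagProd p (N + 1) α at hfact
  subst hfact
  have hTP := totallyPos_bidiagProd_pow (n := N + 1) (t := N + 1) hp hα (Nat.le_succ _)
  refine ⟨by simpa using totallyNonneg_bidiagProd_pow hα 1, fun hdet => ?_, N + 1, N.succ_pos,
    hTP⟩
  simpa [det_pow, hdet] using hTP.det_pos
end
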